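/- arXiv:2402.15352 — 10 statements merged into one kernel-verified Lean document; each statement's English description precedes it below -/
import Mathlib

section
/- Let n, m be positive integers, and let f : ℝⁿ → ℝᵐ be any function. Fix real numbers s < t. For a vector y ∈ ℝⁿ that is not constant (i.e. max_i y_i > min_i y_i), define the normalization T_{s,t}(y) = (t−s)·(y − (min_i y_i)·𝟙ₙ)/(max_i y_i − min_i y_i) + s·𝟙ₙ, and define g(y) = ((max_i y_i − min_i y_i)/(t−s))·(f(T_{s,t}(y)) − s·𝟙ₘ) + (min_i y_i)·𝟙ₘ (i.e. g = T_{s,t}⁻¹ ∘ f ∘ T_{s,t}, where the inverse affine map is the one determined by y). Then g is normalization-equivariant on non-constant vectors: for every non-constant y ∈ ℝⁿ, every a > 0 and every b ∈ ℝ, one has g(a·y + b·𝟙ₙ) = a·g(y) + b·𝟙ₘ. -/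
open Finset

/-- The smallest coordinate of a vector `y ∈ ℝⁿ` (for `n > 0`). -/
noncomputable def vecMin {n : ℕ} (hn : 0 < n) (y : Fin n → ℝ) : ℝ :=
  Finset.univ.inf' ⟨⟨0, hn⟩, Finset.mem_univ _⟩ y

/-- The largest coordinate of a vector `y ∈ ℝⁿ` (for `n > 0`). -/
noncomputable def vecMax {n : ℕ} (hn : 0 < n) (y : Fin n → ℝ) : ℝ :=
  Finset.univ.sup' ⟨⟨0, hn⟩, Finset.mem_univ _⟩ y

/-!
A positive affine change `y ↦ a • y + b` commutes with taking the minimum and the maximum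
coordinate, so it cancels in the normalization: `T (a • y + b) = T y`. The outer affine map
of `g` is built from the same minimum and maximum, so it turns the common value
`f (T y)` into `a • g y + b`.
-/

section MinMax

variable {n : ℕ} (hn : 0 < n)

theorem Monotone.vecMin_comp {φ : ℝ → ℝ} (hφ : Monotone φ) (y : Fin n → ℝ) :
    vecMin hn (φ ∘ y) = φ (vecMin hn y) :=
  (Finset.apply_inf'_eq_inf'_comp _ φ fun _ _ => hφ.map_min).symm

theorem Monotone.vecMax_comp {φ : ℝ → ℝ} (hφ : Monotone φ) (y : Fin n → ℝ) :
    vecMax hn (φ ∘ y) = φ (vecMax hn y) :=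
  (Finset.apply_sup'_eq_sup'_comp _ φ fun _ _ => hφ.map_max).symm

theorem vecMin_mul_add {a : ℝ} (ha : 0 ≤ a) (b : ℝ) (y : Fin n → ℝ) :
    vecMin hn (fun i => a * y i + b) = a * vecMin hn y + b :=
  ((monotone_id.const_mul ha).add_const b).vecMin_comp hn y

theorem vecMax_mul_add {a : ℝ} (ha : 0 ≤ a) (b : ℝ) (y : Fin n → ℝ) :
    vecMax hn (fun i => a * y i + b) = a * vecMax hn y + b :=
  ((monotone_id.const_mul ha).add_const b).vecMax_comp hn y

end MinMax

theorem mul_add_sub_div_mul_add_sub {a : ℝ} (ha : a ≠ 0) (b x u v : ℝ) :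
    (a * x + b - (a * u + b)) / (a * v + b - (a * u + b)) = (x - u) / (v - u) := by
  rw [add_sub_add_right_eq_sub, add_sub_add_right_eq_sub, ← mul_sub, ← mul_sub,
    mul_div_mul_left _ _ ha]

theorem normalized_conjugate_is_normalization_equivariant_general
    {n m : ℕ} (hn : 0 < n)
    (f : (Fin n → ℝ) → Fin m → ℝ) (s t : ℝ)
    (T : (Fin n → ℝ) → Fin n → ℝ)
    (hT : ∀ (y : Fin n → ℝ) (i : Fin n),
      T y i = (t - s) * (y i - vecMin hn y) / (vecMax hn y - vecMin hn y) + s)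
    (g : (Fin n → ℝ) → Fin m → ℝ)
    (hg : ∀ (y : Fin n → ℝ) (j : Fin m),
      g y j = (vecMax hn y - vecMin hn y) / (t - s) * (f (T y) j - s) + vecMin hn y) :
    ∀ y : Fin n → ℝ, vecMin hn y < vecMax hn y →
      ∀ (a b : ℝ), 0 < a →
        g (fun i => a * y i + b) = fun j => a * g y j + b := by
  intro y _ a b ha
  have hmin := vecMin_mul_add hn ha.le b y
  have hmax := vecMax_mul_add hn ha.le b y
  have hT_eq : T (fun i => a * y i + b) = T y := by
    funext i
    rw [hT, hT, hmin, hmax, mul_div_assoc, mul_div_assoc,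
      mul_add_sub_div_mul_add_sub ha.ne']
  funext j
  rw [hg, hg, hT_eq, hmin, hmax]
  ring

/-- **Normalization before/after processing yields a normalization-equivariant map.**
For any `f : ℝⁿ → ℝᵐ` and `s < t`, the map `g = T_{s,t}⁻¹ ∘ f ∘ T_{s,t}`, where
`T_{s,t}` is the linear normalization of a (non-constant) vector to the range `[s, t]`,
is normalization-equivariant on non-constant vectors. -/
theorem normalized_conjugate_is_normalization_equivariant
    {n m : ℕ} (hn : 0 < n) (hm : 0 < m)
    (f : (Fin n → ℝ) → Fin m → ℝ) (s t : ℝ) (hst : s < t)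
    (T : (Fin n → ℝ) → Fin n → ℝ)
    (hT : ∀ (y : Fin n → ℝ) (i : Fin n),
      T y i = (t - s) * (y i - vecMin hn y) / (vecMax hn y - vecMin hn y) + s)
    (g : (Fin n → ℝ) → Fin m → ℝ)
    (hg : ∀ (y : Fin n → ℝ) (j : Fin m),
      g y j = (vecMax hn y - vecMin hn y) / (t - s) * (f (T y) j - s) + vecMin hn y) :
    ∀ y : Fin n → ℝ, vecMin hn y < vecMax hn y →
      ∀ (a b : ℝ), 0 < a →
        g (fun i => a * y i + b) = fun j => a * g y j + b :=
  normalized_conjugate_is_normalization_equivariant_general hn f s t T hT g hg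
end

section
/- Let W ∈ ℝ^{m×n} be a matrix and let f : ℝⁿ → ℝᵐ be the linear filter f(y) = W y. Then f is normalization-equivariant if and only if every row of W sums to 1, i.e. W 𝟙ₙ = 𝟙ₘ. -/
theorem Matrix.mulVec_mul_add_const {ι κ R : Type*} [Fintype κ] [CommSemiring R]
    (W : Matrix ι κ R) (y : κ → R) (a b : R) :
    W.mulVec (fun i => a * y i + b) =
      fun j => a * W.mulVec y j + b * W.mulVec (fun _ => 1) j := by
  have hsplit : (fun i => a * y i + b) = a • y + b • fun _ => (1 : R) := by
    funext i
    simp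
  rw [hsplit, Matrix.mulVec_add, Matrix.mulVec_smul, Matrix.mulVec_smul]
  rfl

/-- **Normalization-equivariant linear filters are exactly those whose rows sum to one.**
The linear filter `f(y) = W y` is normalization-equivariant if and only if every row of
`W` sums to `1`, i.e. `W 𝟙ₙ = 𝟙ₘ`. -/
theorem linear_filter_normalization_equivariant_iff_rows_sum_one
    {n m : ℕ} (W : Matrix (Fin m) (Fin n) ℝ) :
    (∀ (y : Fin n → ℝ) (a b : ℝ), 0 < a →
      W.mulVec (fun i => a * y i + b) = fun j => a * W.mulVec y j + b)
    ↔ W.mulVec (fun _ => 1) = fun _ => 1 := by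
  constructor
  · intro h
    simpa using h 0 1 1 one_pos
  · intro h y a b _
    rw [Matrix.mulVec_mul_add_const, h]
    simp
end

section
/- (Noise2Noise identity.) Let (Ω, 𝓕, P) be a probability space and let x, ε, ε̄ : Ω → ℝⁿ be random vectors such that ε̄ is independent of the pair (x, ε) and E[ε̄] = 0. Set y = x + ε and ȳ = x + ε̄. Let f : ℝⁿ → ℝⁿ be measurable with f(y), x, and ε̄ all square-integrable. Then E‖f(y) − ȳ‖₂² = E‖f(y) − x‖₂² + E‖ε̄‖₂². In particular, the Noise2Noise loss E‖f(y) − ȳ‖₂² differs from the supervised quadratic risk E‖f(y) − x‖₂² by a constant independent of f. -/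
/-!
Write `f(y) − ȳ = (f(y) − x) − ε̄` and expand the square coordinatewise. The cross term
`E[(f(y) − x)ᵢ ε̄ᵢ]` factors by independence, since `f(y) − x` is a measurable function of
`(x, ε)`, and it vanishes because `ε̄` has mean zero.
-/

open MeasureTheory ProbabilityTheory

section

variable {Ω : Type*} [MeasurableSpace Ω] {μ : Measure Ω}

theorem integral_sub_sq_eq_add_of_indepFun {g e : Ω → ℝ} (hg : MemLp g 2 μ) (he : MemLp e 2 μ)
    (hge : g ⟂ᵢ[μ] e) (he_mean : ∫ ω, e ω ∂μ = 0) :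
    ∫ ω, (g ω - e ω) ^ 2 ∂μ = ∫ ω, g ω ^ 2 ∂μ + ∫ ω, e ω ^ 2 ∂μ := by
  have hcross : ∫ ω, g ω * e ω ∂μ = 0 := by
    simpa [he_mean] using hge.integral_mul_eq_mul_integral hg.1 he.1
  have hge_int : Integrable (fun ω => g ω * e ω) μ := hg.integrable_mul he
  calc ∫ ω, (g ω - e ω) ^ 2 ∂μ
      = ∫ ω, (g ω ^ 2 - 2 * (g ω * e ω)) + e ω ^ 2 ∂μ := by congr 1; ext ω; ring
    _ = ∫ ω, g ω ^ 2 ∂μ + ∫ ω, e ω ^ 2 ∂μ := by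
      rw [integral_add (by exact hg.integrable_sq.sub (hge_int.const_mul 2)) he.integrable_sq,
        integral_sub hg.integrable_sq (hge_int.const_mul 2), integral_const_mul, hcross]
      ring

theorem integral_sum_sub_sq_eq_add_of_indepFun {ι : Type*} [Fintype ι] {g e : Ω → ι → ℝ}
    (hg : ∀ i, MemLp (fun ω => g ω i) 2 μ) (he : ∀ i, MemLp (fun ω => e ω i) 2 μ)
    (hge : g ⟂ᵢ[μ] e) (he_mean : ∀ i, ∫ ω, e ω i ∂μ = 0) :
    ∫ ω, ∑ i, (g ω i - e ω i) ^ 2 ∂μ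
      = (∫ ω, ∑ i, g ω i ^ 2 ∂μ) + ∫ ω, ∑ i, e ω i ^ 2 ∂μ := by
  have hsub_sq i : Integrable (fun ω => (g ω i - e ω i) ^ 2) μ := ((hg i).sub (he i)).integrable_sq
  rw [integral_finsetSum _ fun i _ => hsub_sq i,
    integral_finsetSum _ fun i _ => (hg i).integrable_sq,
    integral_finsetSum _ fun i _ => (he i).integrable_sq, ← Finset.sum_add_distrib]
  refine Finset.sum_congr rfl fun i _ => ?_
  exact integral_sub_sq_eq_add_of_indepFun (hg i) (he i)
    (hge.comp (measurable_pi_apply i) (measurable_pi_apply i)) (he_mean i)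

end

theorem noise2noise_identity_general {Ω : Type*} [MeasurableSpace Ω]
    (P : Measure Ω) {n : ℕ}
    (x ε εbar : Ω → Fin n → ℝ)
    (hindep : IndepFun (fun ω => (x ω, ε ω)) εbar P)
    (hmean : ∀ i, ∫ ω, εbar ω i ∂P = 0)
    (f : (Fin n → ℝ) → Fin n → ℝ) (hf : Measurable f)
    (hfy : ∀ i, MemLp (fun ω => f (x ω + ε ω) i) 2 P)
    (hxL2 : ∀ i, MemLp (fun ω => x ω i) 2 P)
    (hεbarL2 : ∀ i, MemLp (fun ω => εbar ω i) 2 P) :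
    ∫ ω, ∑ i, (f (x ω + ε ω) i - (x ω + εbar ω) i) ^ 2 ∂P
      = (∫ ω, ∑ i, (f (x ω + ε ω) i - x ω i) ^ 2 ∂P)
        + ∫ ω, ∑ i, (εbar ω i) ^ 2 ∂P := by
  have hresidual_indep : IndepFun (fun ω => f (x ω + ε ω) - x ω) εbar P :=
    hindep.comp (φ := fun p : (Fin n → ℝ) × (Fin n → ℝ) => f (p.1 + p.2) - p.1) (by fun_prop)
      measurable_id
  simpa only [Pi.sub_apply, Pi.add_apply, sub_sub] using
    integral_sum_sub_sq_eq_add_of_indepFun (fun i => (hfy i).sub (hxL2 i)) hεbarL2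
      hresidual_indep hmean

/-- **Noise2Noise identity.** If `ε̄` is independent of the pair `(x, ε)` and has zero mean,
then for `y = x + ε`, `ȳ = x + ε̄` and any measurable `f` with `f(y)`, `x`, `ε̄`
square-integrable, the Noise2Noise loss `E‖f(y) − ȳ‖₂²` equals the supervised quadratic risk
`E‖f(y) − x‖₂²` plus the constant `E‖ε̄‖₂²`. -/
theorem noise2noise_identity {Ω : Type*} [MeasurableSpace Ω]
    (P : Measure Ω) [IsProbabilityMeasure P] {n : ℕ}
    (x ε εbar : Ω → Fin n → ℝ)
    (hx : Measurable x) (hε : Measurable ε) (hεbar : Measurable εbar)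
    (hindep : IndepFun (fun ω => (x ω, ε ω)) εbar P)
    (hmean : ∀ i, ∫ ω, εbar ω i ∂P = 0)
    (f : (Fin n → ℝ) → Fin n → ℝ) (hf : Measurable f)
    (hfy : ∀ i, MemLp (fun ω => f (x ω + ε ω) i) 2 P)
    (hxL2 : ∀ i, MemLp (fun ω => x ω i) 2 P)
    (hεbarL2 : ∀ i, MemLp (fun ω => εbar ω i) 2 P) :
    ∫ ω, ∑ i, (f (x ω + ε ω) i - (x ω + εbar ω) i) ^ 2 ∂P
      = (∫ ω, ∑ i, (f (x ω + ε ω) i - x ω i) ^ 2 ∂P)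
        + ∫ ω, ∑ i, (εbar ω i) ^ 2 ∂P :=
  noise2noise_identity_general P x ε εbar hindep hmean f hf hfy hxL2 hεbarL2
end

section
/- (Noise2Self identity for blind-spot functions.) Let (Ω, 𝓕, P) be a probability space, x : Ω → ℝⁿ a random vector, and ε : Ω → ℝⁿ a random vector independent of x whose n coordinates ε₁, …, εₙ are mutually independent with E[εᵢ] = 0 for every i. Set y = x + ε. Let f : ℝⁿ → ℝⁿ be a measurable blind-spot function, meaning that for each i the coordinate function f_i(y) depends only on the coordinates (y_j)_{j ≠ i}, i.e. f_i(y + t e_i) = f_i(y) for all y ∈ ℝⁿ and t ∈ ℝ. Assume f(y), x, and ε are square-integrable. Then E‖f(y) − y‖₂² = E‖f(y) − x‖₂² + E‖ε‖₂². In particular, the self-supervised loss E‖f(y) − y‖₂² differs from the supervised quadratic risk E‖f(y) − x‖₂² by a constant independent of f. -/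
/-!
Coordinatewise, `f_i(y) - y_i = (f_i(y) - x_i) - ε_i`. Since `f_i` ignores its `i`-th argument,
`f_i(y) - x_i` is a measurable function of `x` and of `(ε_j)_{j ≠ i}`, and this pair is independent
of `ε_i`. So the cross term `E[(f_i(y) - x_i) ε_i]` factorises as `E[f_i(y) - x_i] · E[ε_i] = 0`,
and expanding the square and summing over `i` gives the identity.
-/

open MeasureTheory ProbabilityTheory

def IsBlindSpot {ι R β : Type*} [DecidableEq ι] [Semiring R] (f : (ι → R) → ι → β) : Prop :=
  ∀ (i : ι) (v : ι → R) (t : R), f (v + t • (Pi.single i 1 : ι → R)) i = f v i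

lemma IsBlindSpot.apply_update {ι R β : Type*} [DecidableEq ι] [Ring R] {f : (ι → R) → ι → β}
    (hf : IsBlindSpot f) (i : ι) (v : ι → R) (c : R) : f (Function.update v i c) i = f v i := by
  have hshift : v + (c - v i) • (Pi.single i 1 : ι → R) = Function.update v i c := by
    ext j
    by_cases hj : j = i <;> simp [hj]
  rw [← hshift, hf]

section

variable {Ω : Type*} [MeasurableSpace Ω] {P : Measure Ω}

lemma ProbabilityTheory.IndepFun.prodMk_left_of_prodMk_right [IsFiniteMeasure P]
    {α β γ : Type*} [MeasurableSpace α] [MeasurableSpace β] [MeasurableSpace γ]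
    {X : Ω → α} {Y : Ω → β} {Z : Ω → γ}
    (hX : Measurable X) (hY : Measurable Y) (hZ : Measurable Z)
    (hXYZ : IndepFun X (fun ω => (Y ω, Z ω)) P) (hYZ : IndepFun Y Z P) :
    IndepFun (fun ω => (X ω, Y ω)) Z P := by
  have hXY : IndepFun X Y P := hXYZ.comp measurable_id measurable_fst
  rw [indepFun_iff_map_prod_eq_prod_map_map (hX.prodMk hY).aemeasurable hZ.aemeasurable]
  rw [indepFun_iff_map_prod_eq_prod_map_map hX.aemeasurable (hY.prodMk hZ).aemeasurable] at hXYZ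
  rw [indepFun_iff_map_prod_eq_prod_map_map hY.aemeasurable hZ.aemeasurable] at hYZ
  rw [indepFun_iff_map_prod_eq_prod_map_map hX.aemeasurable hY.aemeasurable] at hXY
  have hassoc : (fun ω => ((X ω, Y ω), Z ω))
      = MeasurableEquiv.prodAssoc.symm ∘ (fun ω => (X ω, (Y ω, Z ω))) := rfl
  rw [hassoc, ← Measure.map_map MeasurableEquiv.prodAssoc.symm.measurable
    (hX.prodMk (hY.prodMk hZ)), hXYZ, hYZ, hXY, ← Measure.prodAssoc_prod,
    MeasurableEquiv.map_symm_map]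

lemma ProbabilityTheory.iIndepFun.indepFun_update {ι β : Type*} [Fintype ι] [DecidableEq ι]
    [MeasurableSpace β] {X : ι → Ω → β} (hindep : iIndepFun X P) (hX : ∀ j, Measurable (X j))
    (i : ι) (c : β) :
    IndepFun (fun ω => Function.update (fun j => X j ω) i c) (X i) P := by
  let extend : (Finset.univ.erase i → β) → ι → β :=
    fun v j => if h : j ∈ Finset.univ.erase i then v ⟨j, h⟩ else c
  have hextend : Measurable extend := measurable_pi_lambda _ fun j => by
    by_cases hj : j ∈ Finset.univ.erase i <;>
      simp only [extend, hj, dite_true, dite_false] <;> fun_prop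
  have h := (hindep.indepFun_finset (Finset.univ.erase i) {i} (by simp) hX).comp hextend
    (measurable_pi_apply (⟨i, Finset.mem_singleton_self i⟩ : ({i} : Finset ι)))
  convert h using 1
  · ext ω j
    by_cases hj : j = i <;> simp [extend, hj]
  · rfl

lemma integral_sub_sq_eq_of_indepFun {G E : Ω → ℝ} (hG : MemLp G 2 P) (hE : MemLp E 2 P)
    (hGE : IndepFun G E P) (hmean : ∫ ω, E ω ∂P = 0) :
    ∫ ω, (G ω - E ω) ^ 2 ∂P = ∫ ω, G ω ^ 2 ∂P + ∫ ω, E ω ^ 2 ∂P := by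
  have hcross : ∫ ω, G ω * E ω ∂P = 0 := by
    rw [hGE.integral_fun_mul_eq_mul_integral hG.aestronglyMeasurable hE.aestronglyMeasurable,
      hmean, mul_zero]
  have hGE_int : Integrable (fun ω => G ω * E ω) P := hG.integrable_mul hE
  calc ∫ ω, (G ω - E ω) ^ 2 ∂P
      = ∫ ω, (G ω ^ 2 - 2 * (G ω * E ω) + E ω ^ 2) ∂P := by congr with ω; ring
    _ = ∫ ω, G ω ^ 2 ∂P - 2 * ∫ ω, G ω * E ω ∂P + ∫ ω, E ω ^ 2 ∂P := by
      rw [integral_add (f := fun ω => G ω ^ 2 - 2 * (G ω * E ω))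
          (hG.integrable_sq.sub (hGE_int.const_mul 2)) hE.integrable_sq,
        integral_sub hG.integrable_sq (hGE_int.const_mul 2), integral_const_mul]
    _ = ∫ ω, G ω ^ 2 ∂P + ∫ ω, E ω ^ 2 ∂P := by rw [hcross]; ring

lemma IsBlindSpot.integral_sq_sub_noisy_coord [IsProbabilityMeasure P]
    {ι : Type*} [Fintype ι] [DecidableEq ι] {f : (ι → ℝ) → ι → ℝ} (hblind : IsBlindSpot f)
    (hf : Measurable f) {x ε : Ω → ι → ℝ} (hx : Measurable x) (hε : Measurable ε)
    (hindep : IndepFun x ε P) (hcoord : iIndepFun (fun i ω => ε ω i) P)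
    (i : ι) (hmean : ∫ ω, ε ω i ∂P = 0)
    (hfy : MemLp (fun ω => f (x ω + ε ω) i) 2 P) (hxL2 : MemLp (fun ω => x ω i) 2 P)
    (hεL2 : MemLp (fun ω => ε ω i) 2 P) :
    ∫ ω, (f (x ω + ε ω) i - (x ω + ε ω) i) ^ 2 ∂P
      = ∫ ω, (f (x ω + ε ω) i - x ω i) ^ 2 ∂P + ∫ ω, ε ω i ^ 2 ∂P := by
  have hblind_add (a b : ι → ℝ) : f (a + Function.update b i 0) i = f (a + b) i := by
    rw [← hblind.apply_update i (a + b) (a i), ← add_zero (a i), Function.update_add,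
      Function.update_eq_self]
  have hεi : Measurable fun ω => ε ω i := (measurable_pi_apply i).comp hε
  have hrest : Measurable fun ω => Function.update (ε ω) i 0 := by fun_prop
  have hinputs : IndepFun (fun ω => (x ω, Function.update (ε ω) i 0)) (fun ω => ε ω i) P :=
    (hindep.comp (φ := id) (ψ := fun b => (Function.update b i 0, b i)) measurable_id
      (by fun_prop)).prodMk_left_of_prodMk_right hx hrest hεi
      (hcoord.indepFun_update (fun j => (measurable_pi_apply j).comp hε) i 0)
  have hresidual : IndepFun (fun ω => f (x ω + ε ω) i - x ω i) (fun ω => ε ω i) P := by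
    have h := hinputs.comp (φ := fun p => f (p.1 + p.2) i - p.1 i) (by fun_prop) measurable_id
    simpa only [Function.comp_def, hblind_add, id] using h
  simpa only [Pi.add_apply, Pi.sub_apply, sub_add_eq_sub_sub] using
    integral_sub_sq_eq_of_indepFun (hfy.sub hxL2) hεL2 hresidual hmean

end

/-- **Noise2Self identity for blind-spot functions.**
Let `y = x + ε`, where `ε` is independent of `x`, has mutually independent coordinates, and
each coordinate has zero mean. If `f` is a measurable blind-spot function (each coordinate
`f_i(y)` does not depend on `y_i`), and `f(y)`, `x`, `ε` are square-integrable, then the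
self-supervised loss `E‖f(y) − y‖₂²` equals the supervised risk `E‖f(y) − x‖₂²` plus the
constant `E‖ε‖₂²`. -/
theorem noise2self_identity {Ω : Type*} [MeasurableSpace Ω]
    (P : Measure Ω) [IsProbabilityMeasure P] {n : ℕ}
    (x ε : Ω → Fin n → ℝ)
    (hx : Measurable x) (hε : Measurable ε)
    (hindep : IndepFun x ε P)
    (hcoord : iIndepFun (fun i ω => ε ω i) P)
    (hmean : ∀ i, ∫ ω, ε ω i ∂P = 0)
    (f : (Fin n → ℝ) → Fin n → ℝ) (hf : Measurable f)
    (hblind : ∀ (i : Fin n) (v : Fin n → ℝ) (t : ℝ),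
      f (v + t • (Pi.single i 1 : Fin n → ℝ)) i = f v i)
    (hfy : ∀ i, MemLp (fun ω => f (x ω + ε ω) i) 2 P)
    (hxL2 : ∀ i, MemLp (fun ω => x ω i) 2 P)
    (hεL2 : ∀ i, MemLp (fun ω => ε ω i) 2 P) :
    ∫ ω, ∑ i, (f (x ω + ε ω) i - (x ω + ε ω) i) ^ 2 ∂P
      = (∫ ω, ∑ i, (f (x ω + ε ω) i - x ω i) ^ 2 ∂P)
        + ∫ ω, ∑ i, (ε ω i) ^ 2 ∂P := by
  rw [integral_finsetSum _ fun i _ => by exact ((hfy i).sub ((hxL2 i).add (hεL2 i))).integrable_sq,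
    integral_finsetSum _ fun i _ => by exact ((hfy i).sub (hxL2 i)).integrable_sq,
    integral_finsetSum _ fun i _ => by exact (hεL2 i).integrable_sq, ← Finset.sum_add_distrib]
  exact Finset.sum_congr rfl fun i _ => IsBlindSpot.integral_sq_sub_noisy_coord hblind hf hx hε
    hindep hcoord i (hmean i) (hfy i) (hxL2 i) (hεL2 i)
end

section
/- (Recorrupted-to-Recorrupted decorrelation.) Let σ > 0 and α ≠ 0 be real numbers, and let ε, ε′ : Ω → ℝⁿ be independent random vectors, each having n mutually independent coordinates distributed as N(0, σ²). Define η₁ = ε + α ε′ and η₂ = ε − ε′/α. Then η₁ and η₂ are independent random vectors; moreover every coordinate of η₁ has distribution N(0, (1+α²)σ²) and every coordinate of η₂ has distribution N(0, (1 + 1/α²)σ²). -/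
/-! The pair `(ε, ε')` is a Gaussian vector, hence so is its linear image `(η₁, η₂)`, and the two
halves of a Gaussian vector are independent as soon as they are uncorrelated. Here
`Cov(η₁ i, η₂ j) = Cov(ε i, ε j) - α α⁻¹ Cov(ε' i, ε' j) = 0`, since `ε` and `ε'` are independent
and have the same covariance. The marginals are laws of sums of independent centred Gaussians. -/

open MeasureTheory ProbabilityTheory
open scoped NNReal

namespace ProbabilityTheory

variable {Ω : Type*} {mΩ : MeasurableSpace Ω} {P : Measure Ω}

lemma hasLaw_of_map_eq {E : Type*} [MeasurableSpace E] {X : Ω → E} {μ : Measure E} [NeZero μ]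
    (h : P.map X = μ) : HasLaw X μ P :=
  ⟨AEMeasurable.of_map_ne_zero (h ▸ NeZero.ne μ), h⟩

lemma iIndepFun.hasGaussianLaw_of_map_eq_gaussianReal {ι : Type*} [Finite ι] {X : Ω → ι → ℝ}
    {m : ι → ℝ} {v : ι → ℝ≥0} (hind : iIndepFun (fun i ω ↦ X ω i) P)
    (hX : ∀ i, P.map (fun ω ↦ X ω i) = gaussianReal (m i) (v i)) :
    HasGaussianLaw X P :=
  hind.hasGaussianLaw fun i ↦ (hasLaw_of_map_eq (hX i)).hasGaussianLaw

lemma iIndepFun.covariance_eq_ite_of_map_eq_gaussianReal {ι : Type*} [DecidableEq ι]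
    {X : ι → Ω → ℝ} {m : ι → ℝ} {v : ι → ℝ≥0} (hind : iIndepFun X P)
    (hX : ∀ i, P.map (X i) = gaussianReal (m i) (v i)) (i j : ι) :
    cov[X i, X j; P] = if i = j then (v i : ℝ) else 0 := by
  have hL2 (k : ι) : MemLp (X k) 2 P := (hasLaw_of_map_eq (hX k)).hasGaussianLaw.memLp_two
  split_ifs with hij
  · rw [← hij, covariance_self (hL2 i).aemeasurable, (hasLaw_of_map_eq (hX i)).variance_eq,
      variance_id_gaussianReal]
  · exact (hind.indepFun hij).covariance_eq_zero (hL2 i) (hL2 j)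

lemma covariance_add_const_mul_add_const_mul [IsFiniteMeasure P] {X Y X' Y' : Ω → ℝ}
    (hX : MemLp X 2 P) (hY : MemLp Y 2 P) (hX' : MemLp X' 2 P) (hY' : MemLp Y' 2 P)
    (hXY' : cov[X, Y'; P] = 0) (hYX' : cov[Y, X'; P] = 0) (a b : ℝ) :
    cov[fun ω ↦ X ω + a * Y ω, fun ω ↦ X' ω + b * Y' ω; P]
      = cov[X, X'; P] + a * b * cov[Y, Y'; P] := by
  have haY : MemLp (fun ω ↦ a * Y ω) 2 P := hY.const_mul a
  have hbY' : MemLp (fun ω ↦ b * Y' ω) 2 P := hY'.const_mul b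
  change cov[X + fun ω ↦ a * Y ω, X' + fun ω ↦ b * Y' ω; P] = _
  rw [covariance_add_left hX haY (hX'.add hbY'), covariance_add_right hX hX' hbY',
    covariance_add_right haY hX' hbY', covariance_const_mul_left, covariance_const_mul_left,
    covariance_const_mul_right, covariance_const_mul_right, hXY', hYX']
  ring

lemma IndepFun.map_add_const_mul_eq_gaussianReal {X Y : Ω → ℝ} {v : ℝ} (hXY : IndepFun X Y P)
    (hX : P.map X = gaussianReal 0 v.toNNReal) (hY : P.map Y = gaussianReal 0 v.toNNReal)
    (c : ℝ) :
    P.map (fun ω ↦ X ω + c * Y ω) = gaussianReal 0 ((1 + c ^ 2) * v).toNNReal := by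
  have hcY := gaussianReal_const_mul (hasLaw_of_map_eq hY) c
  have hsum : P.map (fun ω ↦ X ω + c * Y ω) = _ := gaussianReal_add_gaussianReal_of_indepFun
    (hXY.comp measurable_id (measurable_const_mul c)) hX hcY.map_eq
  rw [hsum, mul_zero, add_zero, Real.toNNReal_mul (by positivity)]
  congr 1
  ext
  simp only [NNReal.coe_add, NNReal.coe_mul, NNReal.coe_mk, Real.coe_toNNReal',
    max_eq_left (by positivity : (0 : ℝ) ≤ 1 + c ^ 2)]
  ring

lemma HasGaussianLaw.indepFun_add_smul_sub_inv_smul {ι : Type*} [Fintype ι] {X Y : Ω → ι → ℝ}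
    {α : ℝ} (hα : α ≠ 0) (hXY : HasGaussianLaw (fun ω ↦ (X ω, Y ω)) P)
    (hcross : ∀ i j, cov[fun ω ↦ X ω i, fun ω ↦ Y ω j; P] = 0)
    (hcov : ∀ i j, cov[fun ω ↦ X ω i, fun ω ↦ X ω j; P]
      = cov[fun ω ↦ Y ω i, fun ω ↦ Y ω j; P]) :
    IndepFun (fun ω ↦ X ω + α • Y ω) (fun ω ↦ X ω - α⁻¹ • Y ω) P := by
  have := hXY.isProbabilityMeasure
  let L : (ι → ℝ) × (ι → ℝ) →L[ℝ] (ι → ℝ) × (ι → ℝ) :=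
    .prod (.fst ℝ _ _ + α • .snd ℝ _ _) (.fst ℝ _ _ - α⁻¹ • .snd ℝ _ _)
  have hη : HasGaussianLaw (fun ω ↦ (X ω + α • Y ω, X ω - α⁻¹ • Y ω)) P :=
    hXY.map_fun L (X := fun ω ↦ (X ω, Y ω))
  have hX (i : ι) : MemLp (fun ω ↦ X ω i) 2 P := (hXY.fst.eval (X := fun i ω ↦ X ω i) i).memLp_two
  have hY (i : ι) : MemLp (fun ω ↦ Y ω i) 2 P := (hXY.snd.eval (X := fun i ω ↦ Y ω i) i).memLp_two
  refine hη.indepFun_of_covariance_eval fun i j ↦ ?_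
  have hsub : (fun ω ↦ (X ω - α⁻¹ • Y ω) j) = fun ω ↦ X ω j + -α⁻¹ * Y ω j := by
    funext ω
    simp only [Pi.sub_apply, Pi.smul_apply, smul_eq_mul]
    ring
  rw [hsub]
  simp only [Pi.add_apply, Pi.smul_apply, smul_eq_mul]
  rw [covariance_add_const_mul_add_const_mul (hX i) (hY i) (hX j) (hY j) (hcross i j)
    (by rw [covariance_comm, hcross]), hcov]
  field_simp
  ring

end ProbabilityTheory

theorem r2r_decorrelation_general {Ω : Type*} [MeasurableSpace Ω]
    (P : Measure Ω) {n : ℕ}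
    (σ α : ℝ) (hα : α ≠ 0)
    (ε ε' : Ω → Fin n → ℝ)
    (hindep : IndepFun ε ε' P)
    (hεcoord : iIndepFun (fun i ω => ε ω i) P)
    (hε'coord : iIndepFun (fun i ω => ε' ω i) P)
    (hεgauss : ∀ i, P.map (fun ω => ε ω i) = gaussianReal 0 (σ ^ 2).toNNReal)
    (hε'gauss : ∀ i, P.map (fun ω => ε' ω i) = gaussianReal 0 (σ ^ 2).toNNReal) :
    IndepFun (fun ω => ε ω + α • ε' ω) (fun ω => ε ω - α⁻¹ • ε' ω) P ∧
    (∀ i, P.map (fun ω => ε ω i + α * ε' ω i)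
        = gaussianReal 0 (((1 + α ^ 2) * σ ^ 2).toNNReal)) ∧
    (∀ i, P.map (fun ω => ε ω i - ε' ω i / α)
        = gaussianReal 0 (((1 + 1 / α ^ 2) * σ ^ 2).toNNReal)) := by
  have hcoord (i j : Fin n) : IndepFun (fun ω ↦ ε ω i) (fun ω ↦ ε' ω j) P :=
    hindep.comp (measurable_pi_apply i) (measurable_pi_apply j)
  have hεL2 (i : Fin n) := (hasLaw_of_map_eq (hεgauss i)).hasGaussianLaw.memLp_two
  have hε'L2 (i : Fin n) := (hasLaw_of_map_eq (hε'gauss i)).hasGaussianLaw.memLp_two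
  have hjoint := hindep.hasGaussianLaw (hεcoord.hasGaussianLaw_of_map_eq_gaussianReal hεgauss)
    (hε'coord.hasGaussianLaw_of_map_eq_gaussianReal hε'gauss)
  refine ⟨hjoint.indepFun_add_smul_sub_inv_smul hα
    (fun i j ↦ (hcoord i j).covariance_eq_zero (hεL2 i) (hε'L2 j)) fun i j ↦ ?_,
    fun i ↦ (hcoord i i).map_add_const_mul_eq_gaussianReal (hεgauss i) (hε'gauss i) α,
    fun i ↦ ?_⟩
  · rw [hεcoord.covariance_eq_ite_of_map_eq_gaussianReal hεgauss,
      hε'coord.covariance_eq_ite_of_map_eq_gaussianReal hε'gauss]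
  · convert (hcoord i i).map_add_const_mul_eq_gaussianReal (hεgauss i) (hε'gauss i) (-α⁻¹)
      using 2
    · funext ω; ring
    · rw [neg_sq, inv_pow, one_div]

/-- **Recorrupted-to-Recorrupted decorrelation.**
Let `ε, ε′` be independent random vectors, each with `n` mutually independent `N(0, σ²)`
coordinates. Then `η₁ = ε + α ε′` and `η₂ = ε − ε′/α` are independent; moreover every
coordinate of `η₁` is `N(0, (1+α²)σ²)`-distributed and every coordinate of `η₂` is
`N(0, (1+1/α²)σ²)`-distributed. -/
theorem r2r_decorrelation {Ω : Type*} [MeasurableSpace Ω]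
    (P : Measure Ω) [IsProbabilityMeasure P] {n : ℕ}
    (σ α : ℝ) (hσ : 0 < σ) (hα : α ≠ 0)
    (ε ε' : Ω → Fin n → ℝ)
    (hε : Measurable ε) (hε' : Measurable ε')
    (hindep : IndepFun ε ε' P)
    (hεcoord : iIndepFun (fun i ω => ε ω i) P)
    (hε'coord : iIndepFun (fun i ω => ε' ω i) P)
    (hεgauss : ∀ i, P.map (fun ω => ε ω i) = gaussianReal 0 (σ ^ 2).toNNReal)
    (hε'gauss : ∀ i, P.map (fun ω => ε' ω i) = gaussianReal 0 (σ ^ 2).toNNReal) :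
    IndepFun (fun ω => ε ω + α • ε' ω) (fun ω => ε ω - α⁻¹ • ε' ω) P ∧
    (∀ i, P.map (fun ω => ε ω i + α * ε' ω i)
        = gaussianReal 0 (((1 + α ^ 2) * σ ^ 2).toNNReal)) ∧
    (∀ i, P.map (fun ω => ε ω i - ε' ω i / α)
        = gaussianReal 0 (((1 + 1 / α ^ 2) * σ ^ 2).toNNReal)) :=
  r2r_decorrelation_general P σ α hα ε ε' hindep hεcoord hε'coord hεgauss hε'gauss
end

section
/- (Recorrupted-to-Recorrupted loss identity.) Let σ > 0 and α ≠ 0. Let x : Ω → ℝⁿ be a square-integrable random vector, and let ε, ε′ : Ω → ℝⁿ be independent of each other and of x, each with n mutually independent N(0, σ²) coordinates. Set z = x + ε + α ε′ and z̄ = x + ε − ε′/α. Then for every measurable f : ℝⁿ → ℝⁿ with f(z) square-integrable, E‖f(z) − z̄‖₂² = E‖f(z) − x‖₂² + n(1 + 1/α²)σ². In particular, minimizing the R2R loss E‖f(z) − z̄‖₂² is equivalent to minimizing the risk E‖f(z) − x‖₂² on the recorrupted input z. -/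
/-!
Write `w = ε - α⁻¹ ε'`, so that `z = x + (ε + α ε')` and `f(z) - z̄ = (f(z) - x) - w`.
Coordinatewise, `ε + α ε'` and `w` are jointly Gaussian with covariance `σ² - α α⁻¹ σ² = 0`,
hence independent; together with the independence of `x` from the noise, `w` is independent of
`(x, z)`. As `w` is centered, the cross term `E⟨f(z) - x, w⟩` vanishes, and the loss splits as
`E‖f(z) - x‖² + E‖w‖²` with `E‖w‖² = n (1 + α⁻²) σ²`.
-/

open MeasureTheory ProbabilityTheory
open scoped NNReal

namespace ProbabilityTheory

variable {Ω : Type*} [MeasurableSpace Ω] {P : Measure Ω}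

lemma IndepFun.prodMk_left_of_prodMk_right_s9 [IsFiniteMeasure P] {α β γ : Type*}
    [MeasurableSpace α] [MeasurableSpace β] [MeasurableSpace γ]
    {X : Ω → α} {Y : Ω → β} {Z : Ω → γ}
    (hX : AEMeasurable X P) (hY : AEMeasurable Y P) (hZ : AEMeasurable Z P)
    (hXYZ : IndepFun X (fun ω ↦ (Y ω, Z ω)) P) (hYZ : IndepFun Y Z P) :
    IndepFun (fun ω ↦ (X ω, Y ω)) Z P := by
  have hXY : IndepFun X Y P := hXYZ.comp measurable_id measurable_fst
  rw [indepFun_iff_map_prod_eq_prod_map_map (hX.prodMk hY) hZ,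
    (indepFun_iff_map_prod_eq_prod_map_map hX hY).1 hXY]
  calc P.map (fun ω ↦ ((X ω, Y ω), Z ω))
      = (P.map fun ω ↦ (X ω, (Y ω, Z ω))).map MeasurableEquiv.prodAssoc.symm := by
        rw [AEMeasurable.map_map_of_aemeasurable (by fun_prop) (hX.prodMk (hY.prodMk hZ))]
        rfl
    _ = ((P.map X).prod (P.map Y)).prod (P.map Z) := by
        rw [(indepFun_iff_map_prod_eq_prod_map_map hX (hY.prodMk hZ)).1 hXYZ,
          (indepFun_iff_map_prod_eq_prod_map_map hY hZ).1 hYZ, ← Measure.prodAssoc_prod,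
          Measure.map_map (by fun_prop) (by fun_prop)]
        simp

lemma IndepFun.integral_sum_mul_eq_zero {ι β : Type*} [Fintype ι] [MeasurableSpace β]
    {U : Ω → β} {W : Ω → ι → ℝ} (hUW : IndepFun U W P) {g : β → ι → ℝ} (hg : Measurable g)
    (hgU : ∀ i, Integrable (fun ω ↦ g (U ω) i) P) (hW : ∀ i, Integrable (fun ω ↦ W ω i) P)
    (hW₀ : ∀ i, ∫ ω, W ω i ∂P = 0) :
    ∫ ω, ∑ i, g (U ω) i * W ω i ∂P = 0 := by
  have hind i : IndepFun (fun ω ↦ g (U ω) i) (fun ω ↦ W ω i) P :=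
    hUW.comp ((measurable_pi_apply i).comp hg) (measurable_pi_apply i)
  have hint i : Integrable (fun ω ↦ g (U ω) i * W ω i) P :=
    (hind i).integrable_mul (hgU i) (hW i)
  rw [integral_finsetSum _ fun i _ ↦ hint i]
  refine Finset.sum_eq_zero fun i _ ↦ ?_
  rw [(hind i).integral_fun_mul_eq_mul_integral (hgU i).aestronglyMeasurable
    (hW i).aestronglyMeasurable, hW₀ i, mul_zero]

lemma iIndepFun.covariance_eq_ite {ι : Type*} [DecidableEq ι] {X : ι → Ω → ℝ}
    (h : iIndepFun X P) (hX : ∀ i, MemLp (X i) 2 P) (i j : ι) :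
    cov[X i, X j; P] = if i = j then Var[X i; P] else 0 := by
  split_ifs with hij
  · subst hij
    exact covariance_self (hX i).aemeasurable
  · exact (h.indepFun hij).covariance_eq_zero (hX i) (hX j)

lemma covariance_sub_smul_sub_smul [IsFiniteMeasure P] {X Y X' Y' : Ω → ℝ}
    (hX : MemLp X 2 P) (hY : MemLp Y 2 P) (hX' : MemLp X' 2 P) (hY' : MemLp Y' 2 P)
    (hXY' : cov[X, Y'; P] = 0) (hYX' : cov[Y, X'; P] = 0) (a b : ℝ) :
    cov[X - a • Y, X' - b • Y'; P] = cov[X, X'; P] + a * b * cov[Y, Y'; P] := by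
  rw [covariance_sub_left hX (hY.const_smul a) (hX'.sub (hY'.const_smul b)),
    covariance_sub_right hX hX' (hY'.const_smul b),
    covariance_sub_right (hY.const_smul a) hX' (hY'.const_smul b),
    covariance_smul_right, covariance_smul_left, covariance_smul_left,
    covariance_smul_right, hXY', hYX']
  ring

section Gaussian

variable {ι : Type*} {ε ε' : Ω → ι → ℝ} {X Y : Ω → ℝ} {μ μ' : ℝ} {v v' : ℝ≥0}

lemma iIndepFun.covariance_eval_of_hasLaw_gaussianReal [DecidableEq ι]
    (hε : iIndepFun (fun i ω ↦ ε ω i) P)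
    (hεlaw : ∀ i, HasLaw (fun ω ↦ ε ω i) (gaussianReal μ v) P) (i j : ι) :
    cov[fun ω ↦ ε ω i, fun ω ↦ ε ω j; P] = if i = j then (v : ℝ) else 0 := by
  rw [hε.covariance_eq_ite fun i ↦ (hεlaw i).hasGaussianLaw.memLp_two,
    (hεlaw i).variance_eq, variance_id_gaussianReal]

lemma indepFun_add_smul_sub_inv_smul_of_hasLaw_gaussianReal [Fintype ι] [IsProbabilityMeasure P]
    {α : ℝ} (hα : α ≠ 0) (hεε' : IndepFun ε ε' P) (hε : iIndepFun (fun i ω ↦ ε ω i) P)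
    (hε' : iIndepFun (fun i ω ↦ ε' ω i) P)
    (hεlaw : ∀ i, HasLaw (fun ω ↦ ε ω i) (gaussianReal μ v) P)
    (hε'law : ∀ i, HasLaw (fun ω ↦ ε' ω i) (gaussianReal μ' v) P) :
    IndepFun (ε + α • ε') (ε - α⁻¹ • ε') P := by
  classical
  have hεL2 i : MemLp (fun ω ↦ ε ω i) 2 P := (hεlaw i).hasGaussianLaw.memLp_two
  have hε'L2 i : MemLp (fun ω ↦ ε' ω i) 2 P := (hε'law i).hasGaussianLaw.memLp_two
  have hcross i j : cov[fun ω ↦ ε ω i, fun ω ↦ ε' ω j; P] = 0 :=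
    (hεε'.comp (measurable_pi_apply i) (measurable_pi_apply j)).covariance_eq_zero
      (hεL2 i) (hε'L2 j)
  have hjoint : HasGaussianLaw (fun ω ↦ (ε ω, ε' ω)) P :=
    IndepFun.hasGaussianLaw (hε.hasGaussianLaw fun i ↦ (hεlaw i).hasGaussianLaw)
      (hε'.hasGaussianLaw fun i ↦ (hε'law i).hasGaussianLaw) hεε'
  let fst := ContinuousLinearMap.fst ℝ (ι → ℝ) (ι → ℝ)
  let snd := ContinuousLinearMap.snd ℝ (ι → ℝ) (ι → ℝ)
  refine (hjoint.map_fun ((fst - (-α) • snd).prod (fst - α⁻¹ • snd))).indepFun_of_covariance_eval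
    (X := fun i ↦ (fun ω ↦ ε ω i) - (-α) • fun ω ↦ ε' ω i)
    (Y := fun j ↦ (fun ω ↦ ε ω j) - α⁻¹ • fun ω ↦ ε' ω j) (fun i j ↦ ?_) |>.congr ?_ ?_
  · rw [covariance_sub_smul_sub_smul (hεL2 i) (hε'L2 i) (hεL2 j) (hε'L2 j) (hcross i j),
      hε.covariance_eval_of_hasLaw_gaussianReal hεlaw,
      hε'.covariance_eval_of_hasLaw_gaussianReal hε'law]
    · field_simp
      ring
    · rw [covariance_comm, hcross j i]
  · filter_upwards with ω
    ext i
    simp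
  · rfl

lemma memLp_sub_mul_of_hasLaw_gaussianReal (hX : HasLaw X (gaussianReal μ v) P)
    (hY : HasLaw Y (gaussianReal μ' v') P) (c : ℝ) :
    MemLp (fun ω ↦ X ω - c * Y ω) 2 P :=
  hX.hasGaussianLaw.memLp_two.sub (hY.hasGaussianLaw.memLp_two.const_mul c)

lemma integral_sub_mul_of_hasLaw_gaussianReal (hX : HasLaw X (gaussianReal 0 v) P)
    (hY : HasLaw Y (gaussianReal 0 v') P) (c : ℝ) :
    ∫ ω, X ω - c * Y ω ∂P = 0 := by
  have := hX.isProbabilityMeasure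
  rw [integral_sub hX.hasGaussianLaw.integrable (hY.hasGaussianLaw.integrable.const_mul c),
    integral_const_mul, hX.integral_eq, hY.integral_eq, integral_id_gaussianReal,
    integral_id_gaussianReal, mul_zero, sub_zero]

lemma IndepFun.integral_sub_mul_sq_of_hasLaw_gaussianReal (hXY : IndepFun X Y P)
    (hX : HasLaw X (gaussianReal 0 v) P) (hY : HasLaw Y (gaussianReal 0 v) P) (c : ℝ) :
    ∫ ω, (X ω - c * Y ω) ^ 2 ∂P = (1 + c ^ 2) * v := by
  have := hX.isProbabilityMeasure
  have hXL2 : MemLp X 2 P := hX.hasGaussianLaw.memLp_two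
  have hYL2 : MemLp Y 2 P := hY.hasGaussianLaw.memLp_two
  calc ∫ ω, (X ω - c * Y ω) ^ 2 ∂P
      = cov[X - c • Y, X - c • Y; P] := by
        rw [covariance_self (by fun_prop), variance_of_integral_eq_zero (X := X - c • Y)
          (by fun_prop) (integral_sub_mul_of_hasLaw_gaussianReal hX hY c)]
        rfl
    _ = (1 + c ^ 2) * v := by
        rw [covariance_sub_smul_sub_smul hXL2 hYL2 hXL2 hYL2
          (hXY.covariance_eq_zero hXL2 hYL2) (hXY.symm.covariance_eq_zero hYL2 hXL2),
          covariance_self (by fun_prop), covariance_self (by fun_prop), hX.variance_eq,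
          hY.variance_eq, variance_id_gaussianReal]
        ring

lemma IndepFun.integral_sum_sub_smul_sq_of_hasLaw_gaussianReal [Fintype ι]
    (hεε' : IndepFun ε ε' P) (hεlaw : ∀ i, HasLaw (fun ω ↦ ε ω i) (gaussianReal 0 v) P)
    (hε'law : ∀ i, HasLaw (fun ω ↦ ε' ω i) (gaussianReal 0 v) P) (c : ℝ) :
    ∫ ω, ∑ i, (ε - c • ε') ω i ^ 2 ∂P = Fintype.card ι * ((1 + c ^ 2) * v) := by
  have hind i : IndepFun (fun ω ↦ ε ω i) (fun ω ↦ ε' ω i) P :=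
    hεε'.comp (measurable_pi_apply i) (measurable_pi_apply i)
  have hL2 i : MemLp (fun ω ↦ (ε - c • ε') ω i) 2 P :=
    memLp_sub_mul_of_hasLaw_gaussianReal (hεlaw i) (hε'law i) c
  have hsq i : ∫ ω, (ε - c • ε') ω i ^ 2 ∂P = (1 + c ^ 2) * v :=
    (hind i).integral_sub_mul_sq_of_hasLaw_gaussianReal (hεlaw i) (hε'law i) c
  rw [integral_finsetSum _ fun i _ ↦ (hL2 i).integrable_sq, Finset.sum_congr rfl fun i _ ↦ hsq i,
    Finset.sum_const, Finset.card_univ, nsmul_eq_mul]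

end Gaussian

lemma integral_sum_sub_sq_of_integral_sum_mul_eq_zero {ι : Type*} [Fintype ι] {G W : Ω → ι → ℝ}
    (hG : ∀ i, MemLp (fun ω ↦ G ω i) 2 P) (hW : ∀ i, MemLp (fun ω ↦ W ω i) 2 P)
    (horth : ∫ ω, ∑ i, G ω i * W ω i ∂P = 0) :
    ∫ ω, ∑ i, (G ω i - W ω i) ^ 2 ∂P = ∫ ω, ∑ i, G ω i ^ 2 ∂P + ∫ ω, ∑ i, W ω i ^ 2 ∂P := by
  have hG2 : Integrable (fun ω ↦ ∑ i, G ω i ^ 2) P :=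
    integrable_finsetSum _ fun i _ ↦ (hG i).integrable_sq
  have hW2 : Integrable (fun ω ↦ ∑ i, W ω i ^ 2) P :=
    integrable_finsetSum _ fun i _ ↦ (hW i).integrable_sq
  have hGW : Integrable (fun ω ↦ 2 * ∑ i, G ω i * W ω i) P :=
    (integrable_finsetSum _ fun i _ ↦ (hG i).integrable_mul (hW i)).const_mul 2
  have hG2W : Integrable (fun ω ↦ ∑ i, G ω i ^ 2 - 2 * ∑ i, G ω i * W ω i) P := hG2.sub hGW
  calc ∫ ω, ∑ i, (G ω i - W ω i) ^ 2 ∂P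
      = ∫ ω, (∑ i, G ω i ^ 2 - 2 * ∑ i, G ω i * W ω i) + ∑ i, W ω i ^ 2 ∂P := by
        congr with ω
        simp only [Finset.mul_sum, ← Finset.sum_sub_distrib, ← Finset.sum_add_distrib]
        exact Finset.sum_congr rfl fun i _ ↦ by ring
    _ = ∫ ω, ∑ i, G ω i ^ 2 ∂P + ∫ ω, ∑ i, W ω i ^ 2 ∂P := by
        rw [integral_add hG2W hW2, integral_sub hG2 hGW, integral_const_mul, horth,
          mul_zero, sub_zero]

end ProbabilityTheory

theorem r2r_loss_identity_general {Ω : Type*} [MeasurableSpace Ω]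
    (P : Measure Ω) [IsProbabilityMeasure P] {n : ℕ}
    (σ α : ℝ) (hα : α ≠ 0)
    (x ε ε' : Ω → Fin n → ℝ)
    (hx : Measurable x) (hε : Measurable ε) (hε' : Measurable ε')
    (hxL2 : ∀ i, MemLp (fun ω => x ω i) 2 P)
    (hindep : iIndepFun ![x, ε, ε'] P)
    (hεcoord : iIndepFun (fun i ω => ε ω i) P)
    (hε'coord : iIndepFun (fun i ω => ε' ω i) P)
    (hεgauss : ∀ i, P.map (fun ω => ε ω i) = gaussianReal 0 (σ ^ 2).toNNReal)
    (hε'gauss : ∀ i, P.map (fun ω => ε' ω i) = gaussianReal 0 (σ ^ 2).toNNReal)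
    (z zbar : Ω → Fin n → ℝ)
    (hz : ∀ ω, z ω = x ω + ε ω + α • ε' ω)
    (hzbar : ∀ ω, zbar ω = x ω + ε ω - α⁻¹ • ε' ω)
    (f : (Fin n → ℝ) → Fin n → ℝ) (hf : Measurable f)
    (hfz : ∀ i, MemLp (fun ω => f (z ω) i) 2 P) :
    ∫ ω, ∑ i, (f (z ω) i - zbar ω i) ^ 2 ∂P
      = (∫ ω, ∑ i, (f (z ω) i - x ω i) ^ 2 ∂P)
        + n * (1 + 1 / α ^ 2) * σ ^ 2 := by
  have hεlaw i : HasLaw (fun ω ↦ ε ω i) (gaussianReal 0 (σ ^ 2).toNNReal) P :=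
    ⟨by fun_prop, hεgauss i⟩
  have hε'law i : HasLaw (fun ω ↦ ε' ω i) (gaussianReal 0 (σ ^ 2).toNNReal) P :=
    ⟨by fun_prop, hε'gauss i⟩
  have hmeas : ∀ i, Measurable (![x, ε, ε'] i) := by
    intro i; fin_cases i <;> assumption
  have hεε' : IndepFun ε ε' P := hindep.indepFun (show (1 : Fin 3) ≠ 2 by decide)
  have hxs_w : IndepFun (fun ω ↦ (x ω, (ε + α • ε') ω)) (ε - α⁻¹ • ε') P :=
    IndepFun.prodMk_left_of_prodMk_right_s9 (by fun_prop) (by fun_prop) (by fun_prop)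
      ((hindep.indepFun_prodMk hmeas 1 2 0 (by decide) (by decide)).symm.comp measurable_id
        (by fun_prop : Measurable fun p : (Fin n → ℝ) × (Fin n → ℝ) ↦
          (p.1 + α • p.2, p.1 - α⁻¹ • p.2)))
      (indepFun_add_smul_sub_inv_smul_of_hasLaw_gaussianReal hα hεε' hεcoord hε'coord
        hεlaw hε'law)
  have hwL2 i : MemLp (fun ω ↦ (ε - α⁻¹ • ε') ω i) 2 P :=
    memLp_sub_mul_of_hasLaw_gaussianReal (hεlaw i) (hε'law i) α⁻¹
  have horth : ∫ ω, ∑ i, (f (z ω) i - x ω i) * (ε - α⁻¹ • ε') ω i ∂P = 0 := by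
    obtain rfl : z = fun ω ↦ x ω + (ε + α • ε') ω := by ext1 ω; simp [hz, add_assoc]
    exact hxs_w.integral_sum_mul_eq_zero (g := fun p ↦ f (p.1 + p.2) - p.1) (by fun_prop)
      (fun i ↦ ((hfz i).sub (hxL2 i)).integrable one_le_two)
      (fun i ↦ (hwL2 i).integrable one_le_two)
      (fun i ↦ integral_sub_mul_of_hasLaw_gaussianReal (hεlaw i) (hε'law i) _)
  calc ∫ ω, ∑ i, (f (z ω) i - zbar ω i) ^ 2 ∂P
      = ∫ ω, ∑ i, ((f (z ω) i - x ω i) - (ε - α⁻¹ • ε') ω i) ^ 2 ∂P := by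
        simp only [hzbar, Pi.sub_apply, Pi.add_apply, Pi.smul_apply, sub_sub, add_sub_assoc]
    _ = _ := by
        rw [integral_sum_sub_sq_of_integral_sum_mul_eq_zero (G := fun ω i ↦ f (z ω) i - x ω i)
          (fun i ↦ (hfz i).sub (hxL2 i)) hwL2 horth,
          hεε'.integral_sum_sub_smul_sq_of_hasLaw_gaussianReal hεlaw hε'law,
          Real.coe_toNNReal _ (sq_nonneg σ), Fintype.card_fin]
        ring

/-- **Recorrupted-to-Recorrupted loss identity.**
Let `x` be a square-integrable random vector and `ε, ε′` be independent of each other and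
of `x`, each with `n` mutually independent `N(0, σ²)` coordinates. With
`z = x + ε + αε′` and `z̄ = x + ε − ε′/α`, for every measurable `f` with `f(z)`
square-integrable, `E‖f(z) − z̄‖₂² = E‖f(z) − x‖₂² + n(1 + 1/α²)σ²`. -/
theorem r2r_loss_identity {Ω : Type*} [MeasurableSpace Ω]
    (P : Measure Ω) [IsProbabilityMeasure P] {n : ℕ}
    (σ α : ℝ) (hσ : 0 < σ) (hα : α ≠ 0)
    (x ε ε' : Ω → Fin n → ℝ)
    (hx : Measurable x) (hε : Measurable ε) (hε' : Measurable ε')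
    (hxL2 : ∀ i, MemLp (fun ω => x ω i) 2 P)
    (hindep : iIndepFun ![x, ε, ε'] P)
    (hεcoord : iIndepFun (fun i ω => ε ω i) P)
    (hε'coord : iIndepFun (fun i ω => ε' ω i) P)
    (hεgauss : ∀ i, P.map (fun ω => ε ω i) = gaussianReal 0 (σ ^ 2).toNNReal)
    (hε'gauss : ∀ i, P.map (fun ω => ε' ω i) = gaussianReal 0 (σ ^ 2).toNNReal)
    (z zbar : Ω → Fin n → ℝ)
    (hz : ∀ ω, z ω = x ω + ε ω + α • ε' ω)
    (hzbar : ∀ ω, zbar ω = x ω + ε ω - α⁻¹ • ε' ω)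
    (f : (Fin n → ℝ) → Fin n → ℝ) (hf : Measurable f)
    (hfz : ∀ i, MemLp (fun ω => f (z ω) i) 2 P) :
    ∫ ω, ∑ i, (f (z ω) i - zbar ω i) ^ 2 ∂P
      = (∫ ω, ∑ i, (f (z ω) i - x ω i) ^ 2 ∂P)
        + n * (1 + 1 / α ^ 2) * σ ^ 2 :=
  r2r_loss_identity_general P σ α hα x ε ε' hx hε hε' hxL2 hindep hεcoord hε'coord hεgauss hε'gauss
    z zbar hz hzbar f hf hfz
end

section
/- (Hard-thresholding of singular values solves rank-regularized approximation.) Let Y ∈ ℝ^{n×k} have a singular value decomposition Y = U S Vᵀ, where U ∈ ℝ^{n×n} and V ∈ ℝ^{k×k} are orthogonal matrices and S ∈ ℝ^{n×k} has S_{ij} = 0 for i ≠ j and nonnegative diagonal entries s₁ ≥ s₂ ≥ … ≥ s_{min(n,k)} ≥ 0. Let γ ≥ 0 and let φ_{hard,√γ}(S) denote the matrix obtained from S by replacing each diagonal entry s_i by s_i if s_i > √γ and by 0 otherwise. Then X̂ = U φ_{hard,√γ}(S) Vᵀ is a global minimizer over X ∈ ℝ^{n×k} of the objective ‖Y − X‖_F²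 + γ · rank(X). -/
/-!
Put `Z = Uᵀ X V`; orthogonal invariance of the Frobenius norm reduces everything to `S`, whose
nonzero entries `sᵢ` sit at distinct rows and columns. Let `W` be the row space of `Z` and
`pᵢ = ‖P_W eᵢ‖² ∈ [0, 1]`. Bessel's inequality gives `∑ pᵢ ≤ dim W = rank Z`, and the row
`sᵢ eᵢ - zᵢ` of `S - Z` has squared norm at least `sᵢ² (1 - pᵢ)`. Hence
`‖S - Z‖² + γ rank Z ≥ ∑ (sᵢ² (1 - pᵢ) + γ pᵢ) ≥ ∑ min (sᵢ², γ)`, and hard thresholding at `√γ`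
attains the right-hand side entry by entry.
-/

open Matrix

open scoped RealInnerProductSpace Finset

theorem Fintype.sum_comp_le_sum_of_injective {ι κ M : Type*} [Fintype ι] [Fintype κ]
    [AddCommMonoid M] [PartialOrder M] [IsOrderedAddMonoid M] {f : ι → M} (hf : ∀ i, 0 ≤ f i)
    {e : κ → ι} (he : Function.Injective e) :
    ∑ l, f (e l) ≤ ∑ i, f i :=
  (Finset.sum_map Finset.univ ⟨e, he⟩ f).symm.trans_le
    (Finset.sum_le_sum_of_subset_of_nonneg (Finset.subset_univ _) fun i _ _ => hf i)

section Projection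

variable {E : Type*} [NormedAddCommGroup E] [InnerProductSpace ℝ E]

theorem Orthonormal.sum_norm_sq_starProjection_le_finrank {κ : Type*} [Fintype κ] {v : κ → E}
    (hv : Orthonormal ℝ v) (W : Submodule ℝ E) [FiniteDimensional ℝ W] :
    ∑ l, ‖W.starProjection (v l)‖ ^ 2 ≤ Module.finrank ℝ W := by
  let b := stdOrthonormalBasis ℝ W
  have hproj (x : E) : ‖W.starProjection x‖ ^ 2 = ∑ m, ⟪x, (b m : E)⟫ ^ 2 := by
    rw [W.starProjection_apply, Submodule.norm_coe, ← b.sum_sq_inner_right]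
    simp_rw [W.inner_orthogonalProjectionOnto_eq_of_mem_left, real_inner_comm]
  calc ∑ l, ‖W.starProjection (v l)‖ ^ 2 = ∑ m, ∑ l, ⟪v l, (b m : E)⟫ ^ 2 := by
        simp_rw [hproj]; exact Finset.sum_comm
    _ ≤ ∑ m, ‖(b m : E)‖ ^ 2 := by
        gcongr with m
        simpa using hv.sum_inner_products_le (b m : E) (s := Finset.univ)
    _ = Module.finrank ℝ W := by
        simp only [Submodule.norm_coe, b.orthonormal.1, one_pow, Finset.sum_const,
          Finset.card_univ, Fintype.card_fin, nsmul_eq_mul, mul_one]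

theorem Submodule.norm_sq_sub_norm_sq_starProjection_le (W : Submodule ℝ E)
    [W.HasOrthogonalProjection] (x : E) {w : E} (hw : w ∈ W) :
    ‖x‖ ^ 2 - ‖W.starProjection x‖ ^ 2 ≤ ‖x - w‖ ^ 2 := by
  have horth (y : E) (hy : y ∈ W) : ⟪x - W.starProjection x, y⟫ = 0 :=
    W.starProjection_inner_eq_zero x y hy
  have hx := norm_add_sq_real (x - W.starProjection x) (W.starProjection x)
  have hxw := norm_add_sq_real (x - W.starProjection x) (W.starProjection x - w)
  rw [sub_add_cancel, horth _ (W.starProjection_apply_mem x)] at hx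
  rw [sub_add_sub_cancel, horth _ (W.sub_mem (W.starProjection_apply_mem x) hw)] at hxw
  nlinarith [sq_nonneg ‖W.starProjection x - w‖]

theorem Orthonormal.sum_min_sq_le_sum_norm_sq_sub_add_finrank {κ : Type*} [Fintype κ]
    {v : κ → E} (hv : Orthonormal ℝ v) (W : Submodule ℝ E) [FiniteDimensional ℝ W]
    (s : κ → ℝ) {w : κ → E} (hw : ∀ l, w l ∈ W) {γ : ℝ} (hγ : 0 ≤ γ) :
    ∑ l, min (s l ^ 2) γ ≤ ∑ l, ‖s l • v l - w l‖ ^ 2 + γ * Module.finrank ℝ W := by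
  set p : κ → ℝ := fun l => ‖W.starProjection (v l)‖ ^ 2
  have hp_le_one (l : κ) : p l ≤ 1 := by
    simpa [p, hv.1 l] using
      pow_le_pow_left₀ (norm_nonneg _) (W.norm_starProjection_apply_le (v l)) 2
  have hdist (l : κ) : s l ^ 2 * (1 - p l) ≤ ‖s l • v l - w l‖ ^ 2 := by
    have := W.norm_sq_sub_norm_sq_starProjection_le (s l • v l) (hw l)
    rw [map_smul, norm_smul, norm_smul, hv.1 l, Real.norm_eq_abs, mul_pow, mul_pow, sq_abs] at this
    linarith
  calc ∑ l, min (s l ^ 2) γ ≤ ∑ l, (s l ^ 2 * (1 - p l) + γ * p l) := by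
        gcongr with l
        have : 0 ≤ p l := sq_nonneg _
        nlinarith [min_le_left (s l ^ 2) γ, min_le_right (s l ^ 2) γ, hp_le_one l]
    _ ≤ ∑ l, ‖s l • v l - w l‖ ^ 2 + γ * Module.finrank ℝ W := by
        rw [Finset.sum_add_distrib, ← Finset.mul_sum]
        gcongr with l
        · exact hdist l
        · exact hv.sum_norm_sq_starProjection_le_finrank W

end Projection

theorem Matrix.rank_le_card_support {K m n : Type*} [Field K] [Fintype m] [Fintype n]
    [DecidableEq K] (A : Matrix m n K) :
    A.rank ≤ #{p : m × n | A p.1 p.2 ≠ 0} := by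
  set t : Finset (m × n) := {p | A p.1 p.2 ≠ 0}
  have hspan : Submodule.span K (Set.range A.row) ≤ Submodule.span K ↑(t.image fun p => A p.1) := by
    refine Submodule.span_le.mpr ?_
    rintro _ ⟨i, rfl⟩
    by_cases hi : A i = 0
    · simp [Matrix.row, hi]
    · obtain ⟨j, hj⟩ := Function.ne_iff.mp hi
      exact Submodule.subset_span (Finset.mem_image.mpr ⟨(i, j), by simpa [t] using hj, rfl⟩)
  calc A.rank = Module.finrank K (Submodule.span K (Set.range A.row)) :=
        A.rank_eq_finrank_span_row
    _ ≤ (↑(t.image fun p => A p.1) : Set (n → K)).finrank K := Submodule.finrank_mono hspan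
    _ ≤ #(t.image fun p => A p.1) := finrank_span_finset_le_card _
    _ ≤ #t := Finset.card_image_le

theorem Matrix.sum_sq_mul_mul_transpose_of_orthogonal {R m n : Type*} [CommRing R] [Fintype m]
    [Fintype n] [DecidableEq m] [DecidableEq n] {U : Matrix m m R} {V : Matrix n n R}
    (hU : Uᵀ * U = 1) (hV : Vᵀ * V = 1) (A : Matrix m n R) :
    ∑ i, ∑ j, (U * A * Vᵀ) i j ^ 2 = ∑ i, ∑ j, A i j ^ 2 := by
  have hfrob (B : Matrix m n R) : ∑ i, ∑ j, B i j ^ 2 = (B * Bᵀ).trace := by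
    simp [Matrix.trace, Matrix.mul_apply, sq]
  rw [hfrob, hfrob]
  calc (U * A * Vᵀ * (U * A * Vᵀ)ᵀ).trace = (U * (A * (Vᵀ * V) * Aᵀ * Uᵀ)).trace := by
        simp only [Matrix.transpose_mul, Matrix.transpose_transpose, Matrix.mul_assoc]
    _ = (A * (Vᵀ * V) * Aᵀ * (Uᵀ * U)).trace := by rw [Matrix.trace_mul_comm, Matrix.mul_assoc]
    _ = (A * Aᵀ).trace := by rw [hU, hV, Matrix.mul_one, Matrix.mul_one]

theorem Matrix.sum_sq_sub_mul_mul_transpose_of_orthogonal {R m n : Type*} [CommRing R]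
    [Fintype m] [Fintype n] [DecidableEq m] [DecidableEq n] {U : Matrix m m R} {V : Matrix n n R}
    (hU : Uᵀ * U = 1) (hV : Vᵀ * V = 1) (A B : Matrix m n R) :
    ∑ i, ∑ j, ((U * A * Vᵀ) i j - (U * B * Vᵀ) i j) ^ 2 = ∑ i, ∑ j, (A i j - B i j) ^ 2 := by
  simpa only [Matrix.mul_sub, Matrix.sub_mul, Matrix.sub_apply] using
    sum_sq_mul_mul_transpose_of_orthogonal hU hV (A - B)

theorem Matrix.sum_min_sq_le_sum_sq_sub_add_mul_rank {m n : Type*} [Fintype m] [Fintype n]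
    [DecidableEq n] {S : Matrix m n ℝ} (hrow : ∀ i j j', S i j ≠ 0 → S i j' ≠ 0 → j = j')
    (hcol : ∀ i i' j, S i j ≠ 0 → S i' j ≠ 0 → i = i') (Z : Matrix m n ℝ) {γ : ℝ} (hγ : 0 ≤ γ) :
    ∑ i, ∑ j, min (S i j ^ 2) γ ≤ ∑ i, ∑ j, (S i j - Z i j) ^ 2 + γ * Z.rank := by
  -- On the support `κ` of `S`, columns are distinct (so the `e_j` are orthonormal) and rows are
  -- distinct (so the row distances add up to at most `‖S - Z‖²`).
  let κ := {p : m × n // S p.1 p.2 ≠ 0}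
  let v : κ → EuclideanSpace ℝ n := fun p => EuclideanSpace.single p.1.2 1
  have hv : Orthonormal ℝ v := EuclideanSpace.orthonormal_single.comp _
    fun p q h => Subtype.ext (Prod.ext (hcol _ _ _ p.2 (h ▸ q.2)) h)
  let W := (Submodule.span ℝ (Set.range Z.row)).map
    (WithLp.linearEquiv 2 ℝ (n → ℝ)).symm.toLinearMap
  have hW : Module.finrank ℝ W = Z.rank := by
    rw [LinearEquiv.finrank_map_eq, Z.rank_eq_finrank_span_row]
  have hZW (i : m) : WithLp.toLp 2 (Z i) ∈ W :=
    Submodule.mem_map_of_mem (Submodule.subset_span ⟨i, rfl⟩)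
  have hSrow (p : κ) : S p.1.1 p.1.2 • v p = WithLp.toLp 2 (S p.1.1) := by
    ext j
    by_cases hj : j = p.1.2
    · simp [v, hj]
    · have : S p.1.1 j = 0 := by_contra fun h => hj (hrow _ _ _ h p.2)
      simp [v, hj, this]
  have hdist (p : κ) : ‖S p.1.1 p.1.2 • v p - WithLp.toLp 2 (Z p.1.1)‖ ^ 2
      = ∑ j, (S p.1.1 j - Z p.1.1 j) ^ 2 := by
    rw [hSrow, EuclideanSpace.real_norm_sq_eq]; rfl
  have hinj : Function.Injective fun p : κ => p.1.1 :=
    fun p q (h : p.1.1 = q.1.1) => Subtype.ext (Prod.ext h (hrow _ _ _ p.2 (h ▸ q.2)))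
  calc ∑ i, ∑ j, min (S i j ^ 2) γ = ∑ p : κ, min (S p.1.1 p.1.2 ^ 2) γ := by
        rw [← Fintype.sum_prod_type',
          ← Fintype.sum_subtype_add_sum_subtype (fun p => S p.1 p.2 ≠ 0), add_eq_left]
        exact Finset.sum_eq_zero fun p _ => by simp [not_not.mp p.2, hγ]
    _ ≤ ∑ p : κ, ‖S p.1.1 p.1.2 • v p - WithLp.toLp 2 (Z p.1.1)‖ ^ 2 + γ * Module.finrank ℝ W :=
        hv.sum_min_sq_le_sum_norm_sq_sub_add_finrank W _ (fun p => hZW _) hγ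
    _ ≤ ∑ i, ∑ j, (S i j - Z i j) ^ 2 + γ * Z.rank := by
        rw [Finset.sum_congr rfl fun p _ => hdist p, hW]
        gcongr
        exact Fintype.sum_comp_le_sum_of_injective (f := fun i => ∑ j, (S i j - Z i j) ^ 2)
          (fun i => Finset.sum_nonneg fun j _ => sq_nonneg _) hinj

theorem sq_sub_ite_add_ite_eq_min {s γ : ℝ} (hs : 0 ≤ s) (hγ : 0 ≤ γ) :
    (s - if √γ < s then s else 0) ^ 2 + (if √γ < s then γ else 0) = min (s ^ 2) γ := by
  split_ifs with h
  · rw [min_eq_right (Real.lt_sq_of_sqrt_lt h).le]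
    ring
  · rw [min_eq_left ((Real.le_sqrt hs hγ).mp (not_lt.mp h))]
    ring

theorem Matrix.sum_sq_sub_add_mul_rank_le_of_hardThreshold {m n : Type*} [Fintype m] [Fintype n]
    {S D : Matrix m n ℝ} (hS : ∀ i j, 0 ≤ S i j) {γ : ℝ} (hγ : 0 ≤ γ)
    (hD : D = of fun i j => if √γ < S i j then S i j else 0) :
    ∑ i, ∑ j, (S i j - D i j) ^ 2 + γ * D.rank ≤ ∑ i, ∑ j, min (S i j ^ 2) γ := by
  have hrank : D.rank ≤ #{p : m × n | √γ < S p.1 p.2} := by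
    refine D.rank_le_card_support.trans (Finset.card_le_card fun p => ?_)
    simp only [Finset.mem_filter, Finset.mem_univ, true_and, hD, of_apply]
    exact fun h => by_contra fun h' => h (if_neg h')
  have hcount : γ * #{p : m × n | √γ < S p.1 p.2} = ∑ i, ∑ j, if √γ < S i j then γ else 0 := by
    rw [← Fintype.sum_prod_type', ← Finset.sum_filter, Finset.sum_const, nsmul_eq_mul, mul_comm]
  calc ∑ i, ∑ j, (S i j - D i j) ^ 2 + γ * D.rank
      ≤ ∑ i, ∑ j, (S i j - D i j) ^ 2 + γ * #{p : m × n | √γ < S p.1 p.2} := by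
        gcongr
    _ = ∑ i, ∑ j, min (S i j ^ 2) γ := by
        rw [hcount, ← Finset.sum_add_distrib]
        refine Finset.sum_congr rfl fun i _ => ?_
        rw [← Finset.sum_add_distrib]
        refine Finset.sum_congr rfl fun j _ => ?_
        rw [hD, of_apply, sq_sub_ite_add_ite_eq_min (hS i j) hγ]

theorem hard_thresholding_minimizes_rank_regularized_general {n k : ℕ}
    (U : Matrix (Fin n) (Fin n) ℝ) (V : Matrix (Fin k) (Fin k) ℝ)
    (hU : Uᵀ * U = 1) (hU' : U * Uᵀ = 1)
    (hV : Vᵀ * V = 1) (hV' : V * Vᵀ = 1)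
    (S : Matrix (Fin n) (Fin k) ℝ)
    (hSdiag : ∀ (i : Fin n) (j : Fin k), (i : ℕ) ≠ (j : ℕ) → S i j = 0)
    (hSnonneg : ∀ (i : Fin n) (j : Fin k), (i : ℕ) = (j : ℕ) → 0 ≤ S i j)
    (γ : ℝ) (hγ : 0 ≤ γ)
    (Y : Matrix (Fin n) (Fin k) ℝ) (hY : Y = U * S * Vᵀ)
    (Xhat : Matrix (Fin n) (Fin k) ℝ)
    (hXhat : Xhat = U * (Matrix.of fun i j => if Real.sqrt γ < S i j then S i j else 0) * Vᵀ) :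
    ∀ X : Matrix (Fin n) (Fin k) ℝ,
      (∑ i, ∑ j, (Y i j - Xhat i j) ^ 2) + γ * (Xhat.rank : ℝ)
        ≤ (∑ i, ∑ j, (Y i j - X i j) ^ 2) + γ * (X.rank : ℝ) := by
  intro X
  set D : Matrix (Fin n) (Fin k) ℝ := of fun i j => if √γ < S i j then S i j else 0 with hD
  set Z := Uᵀ * X * V
  have hX : U * Z * Vᵀ = X := by
    simp only [Z, ← Matrix.mul_assoc, hU', Matrix.one_mul]
    rw [Matrix.mul_assoc, hV', Matrix.mul_one]
  have hdiag (i j) (h : S i j ≠ 0) : (i : ℕ) = j := not_not.mp (mt (hSdiag i j) h)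
  have hS0 (i j) : 0 ≤ S i j := (em _).elim (hSnonneg i j) fun h => (hSdiag i j h).ge
  calc (∑ i, ∑ j, (Y i j - Xhat i j) ^ 2) + γ * (Xhat.rank : ℝ)
      ≤ ∑ i, ∑ j, (S i j - D i j) ^ 2 + γ * D.rank := by
        rw [hY, hXhat, sum_sq_sub_mul_mul_transpose_of_orthogonal hU hV]
        gcongr
        exact (rank_mul_le_left _ _).trans (rank_mul_le_right _ _)
    _ ≤ ∑ i, ∑ j, min (S i j ^ 2) γ := sum_sq_sub_add_mul_rank_le_of_hardThreshold hS0 hγ hD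
    _ ≤ ∑ i, ∑ j, (S i j - Z i j) ^ 2 + γ * Z.rank :=
        sum_min_sq_le_sum_sq_sub_add_mul_rank
          (fun i j j' hj hj' => Fin.ext ((hdiag i j hj).symm.trans (hdiag i j' hj')))
          (fun i i' j hi hi' => Fin.ext ((hdiag i j hi).trans (hdiag i' j hi').symm)) Z hγ
    _ ≤ (∑ i, ∑ j, (Y i j - X i j) ^ 2) + γ * (X.rank : ℝ) := by
        rw [hY, ← hX, sum_sq_sub_mul_mul_transpose_of_orthogonal hU hV, hX]
        gcongr
        exact (rank_mul_le_left _ _).trans (rank_mul_le_right _ _)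

/-- **Hard-thresholding of singular values solves rank-regularized approximation.**
If `Y = U S Vᵀ` is a singular value decomposition of `Y` (with `U`, `V` orthogonal and `S`
rectangular-diagonal with nonincreasing nonnegative diagonal entries), then for `γ ≥ 0`
the matrix `X̂ = U φ_{hard,√γ}(S) Vᵀ`, obtained by hard-thresholding the singular values at
level `√γ`, globally minimizes `X ↦ ‖Y − X‖_F² + γ·rank X`. -/
theorem hard_thresholding_minimizes_rank_regularized {n k : ℕ}
    (U : Matrix (Fin n) (Fin n) ℝ) (V : Matrix (Fin k) (Fin k) ℝ)
    (hU : Uᵀ * U = 1) (hU' : U * Uᵀ = 1)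
    (hV : Vᵀ * V = 1) (hV' : V * Vᵀ = 1)
    (S : Matrix (Fin n) (Fin k) ℝ)
    (hSdiag : ∀ (i : Fin n) (j : Fin k), (i : ℕ) ≠ (j : ℕ) → S i j = 0)
    (hSnonneg : ∀ (i : Fin n) (j : Fin k), (i : ℕ) = (j : ℕ) → 0 ≤ S i j)
    (hSsorted : ∀ (i i' : Fin n) (j j' : Fin k), (i : ℕ) = (j : ℕ) → (i' : ℕ) = (j' : ℕ) →
      (i : ℕ) ≤ (i' : ℕ) → S i' j' ≤ S i j)
    (γ : ℝ) (hγ : 0 ≤ γ)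
    (Y : Matrix (Fin n) (Fin k) ℝ) (hY : Y = U * S * Vᵀ)
    (Xhat : Matrix (Fin n) (Fin k) ℝ)
    (hXhat : Xhat = U * (Matrix.of fun i j => if Real.sqrt γ < S i j then S i j else 0) * Vᵀ) :
    ∀ X : Matrix (Fin n) (Fin k) ℝ,
      (∑ i, ∑ j, (Y i j - Xhat i j) ^ 2) + γ * (Xhat.rank : ℝ)
        ≤ (∑ i, ∑ j, (Y i j - X i j) ^ 2) + γ * (X.rank : ℝ) :=
  hard_thresholding_minimizes_rank_regularized_general U V hU hU' hV hV' S hSdiag hSnonneg γ hγ Y hY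
    Xhat hXhat
end

section
/- (Soft-thresholding of singular values solves nuclear norm minimization.) Let Y ∈ ℝ^{n×k} have a singular value decomposition Y = U S Vᵀ, where U ∈ ℝ^{n×n} and V ∈ ℝ^{k×k} are orthogonal matrices and S ∈ ℝ^{n×k} has S_{ij} = 0 for i ≠ j and nonnegative diagonal entries s₁ ≥ s₂ ≥ … ≥ s_{min(n,k)} ≥ 0. Let γ ≥ 0 and let φ_{soft,γ}(S) denote the matrix obtained from S by replacing each diagonal entry s_i by max(s_i − γ, 0). Then X̂ = U φ_{soft,γ}(S) Vᵀ is a global minimizer over X ∈ ℝ^{n×k} of the objective (1/2) ‖Y − X‖_F² + γ ‖X‖_*, where ‖X‖_* = trace of the positive semidefinite square root of XᵀX is the nuclear norm (the sum of the singular values of X). -/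
/-!
Write `φ = softThreshold γ` (applied entrywise) and `G = Y - X̂`. Expanding
`‖Y - X‖_F² = ‖G - (X - X̂)‖_F²` shows that `X̂` is optimal as soon as `⟪G, X̂⟫ = γ ‖X̂‖_*` and
`⟪G, X⟫ ≤ γ ‖X‖_*` for every `X`, i.e. `G` is a subgradient of `γ ‖·‖_*` at `X̂`. The Frobenius
pairing and the nuclear norm are invariant under `X ↦ U X Vᵀ`, so it suffices to check this for
the rectangular-diagonal matrices `S - φ(S)` and `φ(S)`. Entrywise, `(s - φ(s)) φ(s) = γ φ(s)`
gives the equality, and `|s - φ(s)| ≤ γ` for `s ≥ 0` makes `S - φ(S)` a `γ`-contraction. Finally,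
a `γ`-contraction `G` satisfies `tr (Gᵀ Z) ≤ γ ‖Z‖_*`: pair the columns of `G` and `Z` along an
orthonormal eigenbasis of `Zᵀ Z` and apply Cauchy–Schwarz.
-/

open Matrix

/-- The nuclear norm of a real matrix `X`: the trace of the positive semidefinite square
root of `Xᵀ X` (equivalently, the sum of the singular values of `X`). -/
noncomputable def nuclearNorm {n k : ℕ} (X : Matrix (Fin n) (Fin k) ℝ) : ℝ :=
  (let hA : (Xᵀ * X).PosSemidef :=
      (by simpa using Matrix.posSemidef_conjTranspose_mul_self X);
    (hA.1.eigenvectorUnitary : Matrix (Fin k) (Fin k) ℝ) *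
      diagonal ((RCLike.ofReal : ℝ → ℝ) ∘ (Real.sqrt ∘ hA.1.eigenvalues)) *
      (star hA.1.eigenvectorUnitary : Matrix (Fin k) (Fin k) ℝ)).trace

section NuclearNorm

variable {n k : ℕ}

lemma nuclearNorm_eq_sum_sqrt_eigenvalues (X : Matrix (Fin n) (Fin k) ℝ)
    (hX : (Xᵀ * X).IsHermitian) : nuclearNorm X = ∑ j, √(hX.eigenvalues j) := by
  rw [nuclearNorm, trace_mul_cycle, Unitary.coe_star_mul_self, one_mul, trace_diagonal]
  rfl

open scoped MatrixOrder in
lemma nuclearNorm_eq_trace_cfcSqrt (X : Matrix (Fin n) (Fin k) ℝ) :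
    nuclearNorm X = (CFC.sqrt (Xᵀ * X)).trace := by
  have hX : (Xᵀ * X).PosSemidef := posSemidef_conjTranspose_mul_self X
  rw [CFC.sqrt_eq_cfc, cfc_nnreal_eq_real _ (Xᵀ * X), hX.1.cfc_eq, IsHermitian.cfc,
    Unitary.conjStarAlgAut_apply, nuclearNorm]
  congr 4
  funext i
  simp [Real.coe_sqrt, Real.coe_toNNReal', max_eq_left (hX.eigenvalues_nonneg i)]

open scoped MatrixOrder in
lemma nuclearNorm_eq_trace_of_mul_self_eq {X : Matrix (Fin n) (Fin k) ℝ}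
    {B : Matrix (Fin k) (Fin k) ℝ} (hB : B.PosSemidef) (h : B * B = Xᵀ * X) :
    nuclearNorm X = B.trace := by
  rw [nuclearNorm_eq_trace_cfcSqrt, CFC.sqrt_unique h (nonneg_iff_posSemidef.mpr hB)]

variable {U : Matrix (Fin n) (Fin n) ℝ} {V : Matrix (Fin k) (Fin k) ℝ}

lemma transpose_mul_orthogonal_conj (hU : Uᵀ * U = 1) (A B : Matrix (Fin n) (Fin k) ℝ) :
    (U * A * Vᵀ)ᵀ * (U * B * Vᵀ) = V * (Aᵀ * B) * Vᵀ := by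
  simp only [transpose_mul, transpose_transpose, Matrix.mul_assoc]
  rw [← Matrix.mul_assoc Uᵀ, hU, Matrix.one_mul]

lemma trace_transpose_mul_orthogonal_conj (hU : Uᵀ * U = 1) (hV : Vᵀ * V = 1)
    (A B : Matrix (Fin n) (Fin k) ℝ) :
    ((U * A * Vᵀ)ᵀ * (U * B * Vᵀ)).trace = (Aᵀ * B).trace := by
  rw [transpose_mul_orthogonal_conj hU, trace_mul_cycle, hV, Matrix.one_mul]

open scoped MatrixOrder in
lemma nuclearNorm_orthogonal_conj (hU : Uᵀ * U = 1) (hV : Vᵀ * V = 1)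
    (A : Matrix (Fin n) (Fin k) ℝ) : nuclearNorm (U * A * Vᵀ) = nuclearNorm A := by
  set P := CFC.sqrt (Aᵀ * A)
  have hP : P.PosSemidef := nonneg_iff_posSemidef.mp (CFC.sqrt_nonneg _)
  have hPP : P * P = Aᵀ * A :=
    CFC.sqrt_mul_sqrt_self _ (nonneg_iff_posSemidef.mpr (posSemidef_conjTranspose_mul_self A))
  have hsq : V * P * Vᵀ * (V * P * Vᵀ) = (U * A * Vᵀ)ᵀ * (U * A * Vᵀ) := by
    rw [transpose_mul_orthogonal_conj hU, ← hPP]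
    simp only [Matrix.mul_assoc]
    rw [← Matrix.mul_assoc Vᵀ, hV, Matrix.one_mul]
  have hB : (V * P * Vᵀ).PosSemidef := by
    simpa only [conjTranspose_eq_transpose_of_trivial] using hP.mul_mul_conjTranspose_same V
  rw [nuclearNorm_eq_trace_of_mul_self_eq hB hsq, trace_mul_cycle,
    hV, Matrix.one_mul, nuclearNorm_eq_trace_cfcSqrt]

end NuclearNorm

lemma trace_transpose_mul_eq_sum {m n : ℕ} (A B : Matrix (Fin m) (Fin n) ℝ) :
    (Aᵀ * B).trace = ∑ i, ∑ j, A i j * B i j := by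
  simp only [trace, diag_apply, mul_apply, transpose_apply]
  exact Finset.sum_comm

lemma trace_eq_sum_dotProduct_mulVec {ι : Type*} [Fintype ι] [DecidableEq ι]
    (M : Matrix ι ι ℝ) (b : OrthonormalBasis ι ℝ (EuclideanSpace ℝ ι)) :
    M.trace = ∑ j, b j ⬝ᵥ (M *ᵥ b j) := by
  rw [← trace_toLin_eq M (EuclideanSpace.basisFun ι ℝ).toBasis,
    ← toEuclideanLin_eq_toLin_orthonormal, LinearMap.trace_eq_sum_inner _ b]
  simp [EuclideanSpace.inner_eq_star_dotProduct, dotProduct_comm]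

lemma OrthonormalBasis.dotProduct_self_eq_one {ι : Type*} [Fintype ι]
    (b : OrthonormalBasis ι ℝ (EuclideanSpace ℝ ι)) (j : ι) : b j ⬝ᵥ b j = 1 := by
  classical
  have h := orthonormal_iff_ite.mp b.orthonormal j j
  rwa [if_pos rfl, EuclideanSpace.inner_eq_star_dotProduct, star_trivial] at h

lemma mulVec_dotProduct_mulVec {ι κ : Type*} [Fintype ι] [Fintype κ] (A B : Matrix κ ι ℝ)
    (v : ι → ℝ) : (A *ᵥ v) ⬝ᵥ (B *ᵥ v) = v ⬝ᵥ ((Aᵀ * B) *ᵥ v) := by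
  rw [← mulVec_mulVec, dotProduct_mulVec v Aᵀ, vecMul_transpose]

lemma dotProduct_le_sqrt_mul_sqrt {ι : Type*} [Fintype ι] (x y : ι → ℝ) :
    x ⬝ᵥ y ≤ √(x ⬝ᵥ x) * √(y ⬝ᵥ y) := by
  simpa only [dotProduct, sq] using Real.sum_mul_le_sqrt_mul_sqrt Finset.univ x y

lemma trace_transpose_mul_le_mul_nuclearNorm {m n : ℕ} {γ : ℝ} (hγ : 0 ≤ γ)
    {G : Matrix (Fin m) (Fin n) ℝ} (hG : ∀ v, (G *ᵥ v) ⬝ᵥ (G *ᵥ v) ≤ γ ^ 2 * (v ⬝ᵥ v))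
    (Z : Matrix (Fin m) (Fin n) ℝ) : (Gᵀ * Z).trace ≤ γ * nuclearNorm Z := by
  have hH : (Zᵀ * Z).IsHermitian := (posSemidef_conjTranspose_mul_self Z).1
  set b := hH.eigenvectorBasis
  have hZb : ∀ j, (Z *ᵥ b j) ⬝ᵥ (Z *ᵥ b j) = hH.eigenvalues j := fun j => by
    rw [mulVec_dotProduct_mulVec, hH.mulVec_eigenvectorBasis, dotProduct_smul,
      b.dotProduct_self_eq_one, smul_eq_mul, mul_one]
  have hGb : ∀ j, √((G *ᵥ b j) ⬝ᵥ (G *ᵥ b j)) ≤ γ := fun j =>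
    calc √((G *ᵥ b j) ⬝ᵥ (G *ᵥ b j)) ≤ √(γ ^ 2 * (b j ⬝ᵥ b j)) := Real.sqrt_le_sqrt (hG _)
      _ = γ := by rw [b.dotProduct_self_eq_one, mul_one, Real.sqrt_sq hγ]
  calc (Gᵀ * Z).trace = ∑ j, (G *ᵥ b j) ⬝ᵥ (Z *ᵥ b j) := by
        simp only [trace_eq_sum_dotProduct_mulVec _ b, mulVec_dotProduct_mulVec]
    _ ≤ ∑ j, √((G *ᵥ b j) ⬝ᵥ (G *ᵥ b j)) * √(hH.eigenvalues j) := by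
        gcongr with j
        exact hZb j ▸ dotProduct_le_sqrt_mul_sqrt _ _
    _ ≤ ∑ j, γ * √(hH.eigenvalues j) := by gcongr with j; exact hGb j
    _ = γ * nuclearNorm Z := by rw [nuclearNorm_eq_sum_sqrt_eigenvalues Z hH, Finset.mul_sum]

lemma half_sum_sq_sub_add_nuclearNorm_le {m n : ℕ} {γ : ℝ}
    (Y Xhat X : Matrix (Fin m) (Fin n) ℝ)
    (hXhat : ((Y - Xhat)ᵀ * Xhat).trace = γ * nuclearNorm Xhat)
    (hX : ((Y - Xhat)ᵀ * X).trace ≤ γ * nuclearNorm X) :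
    (1 / 2) * (∑ i, ∑ j, (Y i j - Xhat i j) ^ 2) + γ * nuclearNorm Xhat
      ≤ (1 / 2) * (∑ i, ∑ j, (Y i j - X i j) ^ 2) + γ * nuclearNorm X := by
  have hexpand : ∀ i j, (Y i j - X i j) ^ 2 = (Y i j - Xhat i j) ^ 2 - 2 * ((Y - Xhat) i j * X i j)
      + 2 * ((Y - Xhat) i j * Xhat i j) + (X i j - Xhat i j) ^ 2 := by
    intro i j; simp only [Matrix.sub_apply]; ring
  have hsum : ∑ i, ∑ j, (Y i j - X i j) ^ 2 = ∑ i, ∑ j, (Y i j - Xhat i j) ^ 2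
      - 2 * ((Y - Xhat)ᵀ * X).trace + 2 * ((Y - Xhat)ᵀ * Xhat).trace
      + ∑ i, ∑ j, (X i j - Xhat i j) ^ 2 := by
    simp only [hexpand, Finset.sum_add_distrib, Finset.sum_sub_distrib, ← Finset.mul_sum,
      trace_transpose_mul_eq_sum]
  have hnonneg : 0 ≤ ∑ i, ∑ j, (X i j - Xhat i j) ^ 2 := by positivity
  linarith

def softThreshold (γ s : ℝ) : ℝ := max (s - γ) 0

lemma softThreshold_nonneg (γ s : ℝ) : 0 ≤ softThreshold γ s := le_max_right _ _

lemma softThreshold_zero {γ : ℝ} (hγ : 0 ≤ γ) : softThreshold γ 0 = 0 := by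
  simp [softThreshold, hγ]

lemma abs_sub_softThreshold_le {γ s : ℝ} (hγ : 0 ≤ γ) (hs : 0 ≤ s) :
    |s - softThreshold γ s| ≤ γ := by
  rcases le_total s γ with h | h
  · rw [softThreshold, max_eq_right (by linarith), sub_zero, abs_of_nonneg hs]; exact h
  · rw [softThreshold, max_eq_left (by linarith), sub_sub_cancel, abs_of_nonneg hγ]

lemma sub_softThreshold_mul_softThreshold (γ s : ℝ) :
    (s - softThreshold γ s) * softThreshold γ s = γ * softThreshold γ s := by
  rcases max_cases (s - γ) 0 with ⟨h, _⟩ | ⟨h, _⟩ <;> rw [softThreshold, h] <;> ring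

lemma Fin.sum_eq_dite_of_val_ne {M : Type*} [AddCommMonoid M] {n : ℕ} (j : ℕ) (g : Fin n → M)
    (hg : ∀ i : Fin n, (i : ℕ) ≠ j → g i = 0) :
    ∑ i, g i = if h : j < n then g ⟨j, h⟩ else 0 := by
  split_ifs with h
  · exact Fintype.sum_eq_single ⟨j, h⟩ fun i hi => hg i fun e => hi (Fin.ext e)
  · exact Finset.sum_eq_zero fun i _ => hg i (by omega)

def Matrix.IsRectDiag {α : Type*} [Zero α] {m n : ℕ} (A : Matrix (Fin m) (Fin n) α) : Prop :=
  ∀ (i : Fin m) (j : Fin n), (i : ℕ) ≠ j → A i j = 0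

namespace Matrix.IsRectDiag

variable {m n : ℕ}

lemma sq_sum_col {α : Type*} [Semiring α] {A : Matrix (Fin m) (Fin n) α} (hA : A.IsRectDiag)
    (j : Fin n) : (∑ i, A i j) ^ 2 = ∑ i, A i j ^ 2 := by
  rw [Fin.sum_eq_dite_of_val_ne j _ fun i hi => hA i j hi,
    Fin.sum_eq_dite_of_val_ne j _ fun i hi => by simp [hA i j hi]]
  split_ifs <;> simp

lemma transpose_mul_self {α : Type*} [Semiring α] {A : Matrix (Fin m) (Fin n) α}
    (hA : A.IsRectDiag) : Aᵀ * A = diagonal fun j => ∑ i, A i j ^ 2 := by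
  ext j j'
  rw [mul_apply, diagonal_apply]
  split_ifs with h
  · subst h; simp [sq]
  · refine Finset.sum_eq_zero fun i _ => ?_
    by_cases hij : (i : ℕ) = j
    · rw [hA i j' fun e => h (Fin.ext (hij.symm.trans e)), mul_zero]
    · rw [transpose_apply, hA i j hij, zero_mul]

lemma nuclearNorm_eq_sum {A : Matrix (Fin m) (Fin n) ℝ} (hA : A.IsRectDiag)
    (hA0 : ∀ i j, 0 ≤ A i j) : nuclearNorm A = ∑ i, ∑ j, A i j := by
  have hB : (diagonal fun j => ∑ i, A i j).PosSemidef :=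
    posSemidef_diagonal_iff.mpr fun j => Finset.sum_nonneg fun i _ => hA0 i j
  rw [nuclearNorm_eq_trace_of_mul_self_eq hB, trace_diagonal, Finset.sum_comm]
  rw [diagonal_mul_diagonal, hA.transpose_mul_self]
  simp only [← sq, hA.sq_sum_col]

lemma mulVec_dotProduct_mulVec_self_le {A : Matrix (Fin m) (Fin n) ℝ} (hA : A.IsRectDiag)
    {γ : ℝ} (hγ : ∀ i j, |A i j| ≤ γ) (v : Fin n → ℝ) :
    (A *ᵥ v) ⬝ᵥ (A *ᵥ v) ≤ γ ^ 2 * (v ⬝ᵥ v) := by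
  have hcol : ∀ j, ∑ i, A i j ^ 2 ≤ γ ^ 2 := fun j => by
    rw [Fin.sum_eq_dite_of_val_ne j _ fun i hi => by simp [hA i j hi]]
    split_ifs
    · exact sq_le_sq' (abs_le.mp (hγ _ _)).1 (abs_le.mp (hγ _ _)).2
    · positivity
  calc (A *ᵥ v) ⬝ᵥ (A *ᵥ v) = ∑ j, (∑ i, A i j ^ 2) * v j ^ 2 := by
        rw [mulVec_dotProduct_mulVec, hA.transpose_mul_self]
        simp only [dotProduct, mulVec_diagonal]
        exact Finset.sum_congr rfl fun j _ => by ring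
    _ ≤ ∑ j, γ ^ 2 * v j ^ 2 := by gcongr with j; exact hcol j
    _ = γ ^ 2 * (v ⬝ᵥ v) := by simp only [dotProduct, Finset.mul_sum, sq]

end Matrix.IsRectDiag

theorem soft_thresholding_minimizes_nuclear_norm_problem_general {n k : ℕ}
    (U : Matrix (Fin n) (Fin n) ℝ) (V : Matrix (Fin k) (Fin k) ℝ)
    (hU : Uᵀ * U = 1) (hU' : U * Uᵀ = 1)
    (hV : Vᵀ * V = 1) (hV' : V * Vᵀ = 1)
    (S : Matrix (Fin n) (Fin k) ℝ)
    (hSdiag : ∀ (i : Fin n) (j : Fin k), (i : ℕ) ≠ (j : ℕ) → S i j = 0)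
    (hSnonneg : ∀ (i : Fin n) (j : Fin k), (i : ℕ) = (j : ℕ) → 0 ≤ S i j)
    (γ : ℝ) (hγ : 0 ≤ γ)
    (Y : Matrix (Fin n) (Fin k) ℝ) (hY : Y = U * S * Vᵀ)
    (Xhat : Matrix (Fin n) (Fin k) ℝ)
    (hXhat : Xhat = U * (Matrix.of fun i j => max (S i j - γ) 0) * Vᵀ) :
    ∀ X : Matrix (Fin n) (Fin k) ℝ,
      (1 / 2) * (∑ i, ∑ j, (Y i j - Xhat i j) ^ 2) + γ * nuclearNorm Xhat
        ≤ (1 / 2) * (∑ i, ∑ j, (Y i j - X i j) ^ 2) + γ * nuclearNorm X := by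
  intro X
  set D : Matrix (Fin n) (Fin k) ℝ := of fun i j => softThreshold γ (S i j)
  have hXhatD : Xhat = U * D * Vᵀ := hXhat
  have hD : D.IsRectDiag := fun i j h => by simp [D, hSdiag i j h, softThreshold_zero hγ]
  have hG : (S - D).IsRectDiag := fun i j h => by
    rw [Matrix.sub_apply, hSdiag i j h, hD i j h, sub_zero]
  have hGγ : ∀ i j, |(S - D) i j| ≤ γ := fun i j => by
    by_cases h : (i : ℕ) = j
    · exact abs_sub_softThreshold_le hγ (hSnonneg i j h)
    · rw [hG i j h, abs_zero]; exact hγ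
  have hYXhat : Y - Xhat = U * (S - D) * Vᵀ := by
    rw [hY, hXhatD, ← Matrix.sub_mul, ← Matrix.mul_sub]
  refine half_sum_sq_sub_add_nuclearNorm_le Y Xhat X ?_ ?_
  · rw [hYXhat, hXhatD, trace_transpose_mul_orthogonal_conj hU hV,
      nuclearNorm_orthogonal_conj hU hV, hD.nuclearNorm_eq_sum fun _ _ => softThreshold_nonneg _ _,
      trace_transpose_mul_eq_sum]
    simp only [Finset.mul_sum]
    exact Fintype.sum_congr _ _ fun i => Fintype.sum_congr _ _ fun j =>
      sub_softThreshold_mul_softThreshold γ (S i j)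
  · obtain ⟨Z, rfl⟩ : ∃ Z, X = U * Z * Vᵀ :=
      ⟨Uᵀ * X * V, by
        rw [← Matrix.mul_assoc, ← Matrix.mul_assoc, hU', Matrix.one_mul, Matrix.mul_assoc, hV',
          Matrix.mul_one]⟩
    rw [hYXhat, trace_transpose_mul_orthogonal_conj hU hV, nuclearNorm_orthogonal_conj hU hV]
    exact trace_transpose_mul_le_mul_nuclearNorm hγ (hG.mulVec_dotProduct_mulVec_self_le hGγ) Z

/-- **Soft-thresholding of singular values solves nuclear norm minimization.**
If `Y = U S Vᵀ` is a singular value decomposition of `Y` (with `U`, `V` orthogonal and `S`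
rectangular-diagonal with nonincreasing nonnegative diagonal entries), then for `γ ≥ 0`
the matrix `X̂ = U φ_{soft,γ}(S) Vᵀ`, obtained by soft-thresholding the singular values at
level `γ`, globally minimizes `X ↦ (1/2)‖Y − X‖_F² + γ‖X‖_*`. -/
theorem soft_thresholding_minimizes_nuclear_norm_problem {n k : ℕ}
    (U : Matrix (Fin n) (Fin n) ℝ) (V : Matrix (Fin k) (Fin k) ℝ)
    (hU : Uᵀ * U = 1) (hU' : U * Uᵀ = 1)
    (hV : Vᵀ * V = 1) (hV' : V * Vᵀ = 1)
    (S : Matrix (Fin n) (Fin k) ℝ)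
    (hSdiag : ∀ (i : Fin n) (j : Fin k), (i : ℕ) ≠ (j : ℕ) → S i j = 0)
    (hSnonneg : ∀ (i : Fin n) (j : Fin k), (i : ℕ) = (j : ℕ) → 0 ≤ S i j)
    (hSsorted : ∀ (i i' : Fin n) (j j' : Fin k), (i : ℕ) = (j : ℕ) → (i' : ℕ) = (j' : ℕ) →
      (i : ℕ) ≤ (i' : ℕ) → S i' j' ≤ S i j)
    (γ : ℝ) (hγ : 0 ≤ γ)
    (Y : Matrix (Fin n) (Fin k) ℝ) (hY : Y = U * S * Vᵀ)
    (Xhat : Matrix (Fin n) (Fin k) ℝ)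
    (hXhat : Xhat = U * (Matrix.of fun i j => max (S i j - γ) 0) * Vᵀ) :
    ∀ X : Matrix (Fin n) (Fin k) ℝ,
      (1 / 2) * (∑ i, ∑ j, (Y i j - Xhat i j) ^ 2) + γ * nuclearNorm Xhat
        ≤ (1 / 2) * (∑ i, ∑ j, (Y i j - X i j) ^ 2) + γ * nuclearNorm X :=
  soft_thresholding_minimizes_nuclear_norm_problem_general U V hU hU' hV hV' S hSdiag hSnonneg γ hγ
    Y hY Xhat hXhat
end

section
/- (OWF upper bound on the risk of a convex-combination denoiser.) Fix x ∈ ℝⁿ, σ > 0, and an index c ∈ {1, …, n}. Let ε : Ω → ℝⁿ be a random vector with E[ε] = 0 and E[ε_i ε_j] = σ² δ_{ij} for all i, j, and set y = x + ε. Let v ∈ ℝⁿ be the vector with entries v_i = |x_i − x_c|, and define the symmetric positive definite matrix Q = v vᵀ + σ² Iₙ. Then for every θ ∈ ℝⁿ with 𝟙ₙᵀ θ = 1 and θ ⪰ 0 (all entries nonnegative), the quadratic risk of the convex-combination estimator f_θ(y) = θᵀ y satisfies E[(θᵀ y − x_c)²] ≤ θᵀ Q θ. -/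
/-!
Because the weights sum to one, `θᵀy − x_c = θᵀ(x − x_c 𝟙) + θᵀε`. The noise term has mean zero,
so the risk is the squared bias plus `θᵀ Σ θ`, where `Σ = σ² Iₙ` is the second-moment matrix of
`ε`. As `Q = v vᵀ + Σ`, it remains to bound the bias, and for `θ ⪰ 0` the triangle inequality
gives `|θᵀ(x − x_c 𝟙)| ≤ θᵀ v`.
-/

open MeasureTheory Matrix

section SecondMoments

variable {Ω ι : Type*} [Fintype ι] [MeasurableSpace Ω] {P : Measure Ω} {ε : Ω → ι → ℝ}

lemma sq_dotProduct_eq_sum (θ e : ι → ℝ) :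
    (θ ⬝ᵥ e) ^ 2 = ∑ i, ∑ j, θ i * θ j * (e i * e j) := by
  simp only [dotProduct, sq, Finset.sum_mul_sum]
  exact Finset.sum_congr rfl fun i _ => Finset.sum_congr rfl fun j _ => by ring

lemma integrable_dotProduct (h : ∀ i, Integrable (fun ω => ε ω i) P) (θ : ι → ℝ) :
    Integrable (fun ω => θ ⬝ᵥ ε ω) P :=
  integrable_finsetSum _ fun i _ => (h i).const_mul (θ i)

lemma integral_dotProduct (h : ∀ i, Integrable (fun ω => ε ω i) P) (θ : ι → ℝ) :
    ∫ ω, θ ⬝ᵥ ε ω ∂P = θ ⬝ᵥ fun i => ∫ ω, ε ω i ∂P := by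
  simp only [dotProduct]
  rw [integral_finsetSum _ fun i _ => (h i).const_mul (θ i)]
  simp only [integral_const_mul]

lemma integrable_sq_dotProduct (h : ∀ i j, Integrable (fun ω => ε ω i * ε ω j) P)
    (θ : ι → ℝ) : Integrable (fun ω => (θ ⬝ᵥ ε ω) ^ 2) P := by
  simp only [sq_dotProduct_eq_sum]
  exact integrable_finsetSum _ fun i _ =>
    integrable_finsetSum _ fun j _ => (h i j).const_mul _

lemma integral_sq_dotProduct (h : ∀ i j, Integrable (fun ω => ε ω i * ε ω j) P)
    (θ : ι → ℝ) :
    ∫ ω, (θ ⬝ᵥ ε ω) ^ 2 ∂P = θ ⬝ᵥ (of fun i j => ∫ ω, ε ω i * ε ω j ∂P) *ᵥ θ := by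
  simp only [sq_dotProduct_eq_sum]
  rw [integral_finsetSum _ fun i _ =>
    integrable_finsetSum _ fun j _ => (h i j).const_mul _]
  simp only [dotProduct, mulVec, of_apply, Finset.mul_sum]
  refine Finset.sum_congr rfl fun i _ => ?_
  rw [integral_finsetSum _ fun j _ => (h i j).const_mul _]
  exact Finset.sum_congr rfl fun j _ => by rw [integral_const_mul]; ring

end SecondMoments

lemma integral_add_sq_of_integral_eq_zero {Ω : Type*} [MeasurableSpace Ω] {P : Measure Ω}
    [IsProbabilityMeasure P] {Z : Ω → ℝ} (hZ : Integrable Z P)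
    (hZ2 : Integrable (fun ω => Z ω ^ 2) P) (hmean : ∫ ω, Z ω ∂P = 0) (b : ℝ) :
    ∫ ω, (b + Z ω) ^ 2 ∂P = b ^ 2 + ∫ ω, Z ω ^ 2 ∂P := by
  have hexpand : (fun ω => (b + Z ω) ^ 2) = fun ω => (b ^ 2 + 2 * b * Z ω) + Z ω ^ 2 := by
    funext ω; ring
  have hlin : Integrable (fun ω => 2 * b * Z ω) P := hZ.const_mul _
  have haff : Integrable (fun ω => b ^ 2 + 2 * b * Z ω) P := (integrable_const _).add hlin
  rw [hexpand, integral_add haff hZ2, integral_add (integrable_const _) hlin, integral_const,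
    integral_const_mul, hmean]
  simp

lemma dotProduct_add_sub_eq_of_sum_eq_one {ι : Type*} [Fintype ι] {θ : ι → ℝ}
    (hθ : ∑ i, θ i = 1) (x e : ι → ℝ) (a : ℝ) :
    θ ⬝ᵥ (x + e) - a = θ ⬝ᵥ (fun i => x i - a) + θ ⬝ᵥ e := by
  have : θ ⬝ᵥ (fun i => x i - a) = θ ⬝ᵥ x - a := by
    simp only [dotProduct, mul_sub, Finset.sum_sub_distrib, ← Finset.sum_mul, hθ, one_mul]
  rw [this, dotProduct_add]; ring

lemma abs_dotProduct_le_dotProduct_abs {ι : Type*} [Fintype ι] {θ : ι → ℝ}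
    (hθ : ∀ i, 0 ≤ θ i) (w : ι → ℝ) : |θ ⬝ᵥ w| ≤ θ ⬝ᵥ fun i => |w i| :=
  (Finset.abs_sum_le_sum_abs _ _).trans_eq <|
    Finset.sum_congr rfl fun i _ => by rw [abs_mul, abs_of_nonneg (hθ i)]

lemma dotProduct_vecMulVec_add_mulVec {ι : Type*} [Fintype ι] (v θ : ι → ℝ)
    (M : Matrix ι ι ℝ) :
    θ ⬝ᵥ (vecMulVec v v + M) *ᵥ θ = (θ ⬝ᵥ v) ^ 2 + θ ⬝ᵥ M *ᵥ θ := by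
  rw [add_mulVec, dotProduct_add, vecMulVec_mulVec]
  simp [dotProduct_smul, dotProduct_comm v θ, sq]

theorem owf_risk_upper_bound_general {Ω : Type*} [MeasurableSpace Ω]
    (P : Measure Ω) [IsProbabilityMeasure P] {n : ℕ}
    (x : Fin n → ℝ) (σ : ℝ) (c : Fin n)
    (ε : Ω → Fin n → ℝ)
    (hint1 : ∀ i, Integrable (fun ω => ε ω i) P)
    (hint2 : ∀ i j, Integrable (fun ω => ε ω i * ε ω j) P)
    (hmean : ∀ i, ∫ ω, ε ω i ∂P = 0)
    (hcov : ∀ i j, ∫ ω, ε ω i * ε ω j ∂P = if i = j then σ ^ 2 else 0)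
    (Q : Matrix (Fin n) (Fin n) ℝ)
    (hQ : Q = Matrix.of fun i j =>
      |x i - x c| * |x j - x c| + if i = j then σ ^ 2 else 0) :
    ∀ θ : Fin n → ℝ, ∑ i, θ i = 1 → (∀ i, 0 ≤ θ i) →
      ∫ ω, ((∑ i, θ i * (x i + ε ω i)) - x c) ^ 2 ∂P ≤ θ ⬝ᵥ Q.mulVec θ := by
  intro θ hsum hpos
  set v : Fin n → ℝ := fun i => |x i - x c|
  have hQ_split : Q = vecMulVec v v + of fun i j => ∫ ω, ε ω i * ε ω j ∂P := by
    ext i j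
    simp [hQ, v, vecMulVec, hcov]
  have hrisk : ∫ ω, (θ ⬝ᵥ (x + ε ω) - x c) ^ 2 ∂P
      = (θ ⬝ᵥ fun i => x i - x c) ^ 2 + ∫ ω, (θ ⬝ᵥ ε ω) ^ 2 ∂P := by
    simp_rw [dotProduct_add_sub_eq_of_sum_eq_one hsum]
    refine integral_add_sq_of_integral_eq_zero (integrable_dotProduct hint1 θ)
      (integrable_sq_dotProduct hint2 θ) ?_ _
    simp [integral_dotProduct hint1, hmean]
  have hbias : (θ ⬝ᵥ fun i => x i - x c) ^ 2 ≤ (θ ⬝ᵥ v) ^ 2 :=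
    sq_le_sq.2 ((abs_dotProduct_le_dotProduct_abs hpos _).trans (le_abs_self _))
  change ∫ ω, (θ ⬝ᵥ (x + ε ω) - x c) ^ 2 ∂P ≤ _
  rw [hrisk, hQ_split, dotProduct_vecMulVec_add_mulVec, integral_sq_dotProduct hint2]
  exact add_le_add_left hbias _

/-- **OWF upper bound on the risk of a convex-combination denoiser.**
Let `y = x + ε` with `E[ε] = 0` and `E[ε_i ε_j] = σ² δ_{ij}`, let `v_i = |x_i − x_c|` and
`Q = v vᵀ + σ² Iₙ`. For any convex weights `θ` (nonnegative, summing to one), the quadratic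
risk of the estimator `θᵀ y` of the pixel `x_c` satisfies `E[(θᵀy − x_c)²] ≤ θᵀ Q θ`. -/
theorem owf_risk_upper_bound {Ω : Type*} [MeasurableSpace Ω]
    (P : Measure Ω) [IsProbabilityMeasure P] {n : ℕ}
    (x : Fin n → ℝ) (σ : ℝ) (hσ : 0 < σ) (c : Fin n)
    (ε : Ω → Fin n → ℝ) (hε : Measurable ε)
    (hint1 : ∀ i, Integrable (fun ω => ε ω i) P)
    (hint2 : ∀ i j, Integrable (fun ω => ε ω i * ε ω j) P)
    (hmean : ∀ i, ∫ ω, ε ω i ∂P = 0)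
    (hcov : ∀ i j, ∫ ω, ε ω i * ε ω j ∂P = if i = j then σ ^ 2 else 0)
    (Q : Matrix (Fin n) (Fin n) ℝ)
    (hQ : Q = Matrix.of fun i j =>
      |x i - x c| * |x j - x c| + if i = j then σ ^ 2 else 0) :
    ∀ θ : Fin n → ℝ, ∑ i, θ i = 1 → (∀ i, 0 ≤ θ i) →
      ∫ ω, ((∑ i, θ i * (x i + ε ω i)) - x c) ^ 2 ∂P ≤ θ ⬝ᵥ Q.mulVec θ :=
  owf_risk_upper_bound_general P x σ c ε hint1 hint2 hmean hcov Q hQ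
end

section
/- (Normalization-equivariance of networks built from affine convolutions and sort pooling.) Call a map g : ℝᵖ → ℝ^q admissible if either (i) g is linear with g(𝟙ₚ) = 𝟙_q (an affine-constrained linear map, i.e. every row of its matrix sums to one), or (ii) p = q is even and g is a pairwise sorting nonlinearity: the coordinates are partitioned into consecutive pairs and g maps each pair (u, v) to (min(u, v), max(u, v)). Then every finite composition f = g_L ∘ … ∘ g_1 of admissible maps is normalization-equivariant: f(a·y + b·𝟙) = a·f(y) + b·𝟙 for all inputs y, all a > 0 and all b ∈ ℝ. -/
/-- Composition of a chain of layers `g l : ℝ^{d l} → ℝ^{d (l+1)}`: `neuralChain d g L` is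
`g (L-1) ∘ … ∘ g 1 ∘ g 0`. -/
def neuralChain (d : ℕ → ℕ) (g : ∀ l : ℕ, (Fin (d l) → ℝ) → (Fin (d (l + 1)) → ℝ)) :
    (L : ℕ) → (Fin (d 0) → ℝ) → (Fin (d L) → ℝ)
  | 0 => id
  | L + 1 => fun y => g L (neuralChain d g L y)

/-!
Both kinds of layer commute with every increasing affine map `t ↦ a t + b` applied
coordinatewise: a linear layer fixing `𝟙` does so by linearity, and a sorting layer does so
because `min` and `max` commute with any monotone map. Equivariance is stable under
composition, so it passes to the whole chain by induction on its length.
-/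

def NormalizationEquivariant {ι κ : Type*} (f : (ι → ℝ) → (κ → ℝ)) : Prop :=
  ∀ (y : ι → ℝ) (a b : ℝ), 0 < a → f (fun i => a * y i + b) = fun i => a * f y i + b

namespace NormalizationEquivariant

variable {ι κ μ : Type*}

theorem id : NormalizationEquivariant (id : (ι → ℝ) → (ι → ℝ)) :=
  fun _ _ _ _ => rfl

theorem comp {g : (κ → ℝ) → (μ → ℝ)} {f : (ι → ℝ) → (κ → ℝ)}
    (hg : NormalizationEquivariant g) (hf : NormalizationEquivariant f) :
    NormalizationEquivariant (g ∘ f) := fun y a b ha => by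
  simp only [Function.comp_apply, hf y a b ha, hg (f y) a b ha]

theorem of_isLinearMap {f : (ι → ℝ) → (κ → ℝ)} (hlin : IsLinearMap ℝ f)
    (hone : f (fun _ => 1) = fun _ => 1) : NormalizationEquivariant f := fun y a b _ => by
  have hnorm : (fun i => a * y i + b) = a • y + b • (fun _ : ι => (1 : ℝ)) := by
    funext i; simp
  rw [hnorm, hlin.map_add, hlin.map_smul, hlin.map_smul, hone]
  funext i; simp

theorem of_forall_eq_min_or_max {f : (ι → ℝ) → (κ → ℝ)}
    (hf : ∀ k, ∃ i j : ι, (∀ z, f z k = min (z i) (z j)) ∨ (∀ z, f z k = max (z i) (z j))) :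
    NormalizationEquivariant f := fun y a b ha => by
  have hmono : Monotone fun t : ℝ => a * t + b := fun s t hst => by
    simp only; gcongr
  funext k
  obtain ⟨i, j, hmin | hmax⟩ := hf k
  · rw [hmin, hmin, hmono.map_min]
  · rw [hmax, hmax, hmono.map_max]

end NormalizationEquivariant

theorem forall_eq_min_or_max_of_sortPairs {n n' m : ℕ} {g : (Fin n → ℝ) → (Fin n' → ℝ)}
    (hm : n = 2 * m) (h : n' = n)
    (hsort : ∀ (z : Fin n → ℝ) (j : ℕ) (hj : j < m),
      g z (Fin.cast h.symm ⟨2 * j, by omega⟩)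
          = min (z ⟨2 * j, by omega⟩) (z ⟨2 * j + 1, by omega⟩) ∧
      g z (Fin.cast h.symm ⟨2 * j + 1, by omega⟩)
          = max (z ⟨2 * j, by omega⟩) (z ⟨2 * j + 1, by omega⟩))
    (k : Fin n') : ∃ i j : Fin n,
      (∀ z, g z k = min (z i) (z j)) ∨ (∀ z, g z k = max (z i) (z j)) := by
  have hk : k.val / 2 < m := by omega
  refine ⟨⟨2 * (k.val / 2), by omega⟩, ⟨2 * (k.val / 2) + 1, by omega⟩, ?_⟩
  rcases Nat.even_or_odd' k.val with ⟨j, hj | hj⟩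
  · have hkj : k = Fin.cast h.symm ⟨2 * (k.val / 2), by omega⟩ := Fin.ext (by simp only [Fin.cast_mk]; omega)
    exact .inl fun z => (congrArg (g z) hkj).trans (hsort z _ hk).1
  · have hkj : k = Fin.cast h.symm ⟨2 * (k.val / 2) + 1, by omega⟩ := Fin.ext (by simp only [Fin.cast_mk]; omega)
    exact .inr fun z => (congrArg (g z) hkj).trans (hsort z _ hk).2

theorem neuralChain_normalizationEquivariant {d : ℕ → ℕ}
    {g : ∀ l : ℕ, (Fin (d l) → ℝ) → (Fin (d (l + 1)) → ℝ)}
    (hg : ∀ l, NormalizationEquivariant (g l)) :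
    ∀ L, NormalizationEquivariant (neuralChain d g L)
  | 0 => NormalizationEquivariant.id
  | L + 1 => (hg L).comp (neuralChain_normalizationEquivariant hg L)

/-- **Normalization-equivariance of networks built from affine convolutions and sort
pooling.** Any finite composition of admissible layers — affine-constrained linear maps
(linear maps sending the all-ones vector to the all-ones vector) and pairwise sorting
nonlinearities (mapping each consecutive pair of coordinates `(u, v)` to
`(min u v, max u v)`) — is normalization-equivariant:
`f(a·y + b·𝟙) = a·f(y) + b·𝟙` for all `y`, all `a > 0` and all `b`. -/
theorem affine_conv_sort_pool_normalization_equivariant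
    (d : ℕ → ℕ) (g : ∀ l : ℕ, (Fin (d l) → ℝ) → (Fin (d (l + 1)) → ℝ))
    (hg : ∀ l,
      (IsLinearMap ℝ (g l) ∧ g l (fun _ => 1) = fun _ => 1) ∨
      ∃ (m : ℕ) (hm : d l = 2 * m) (h : d (l + 1) = d l),
        ∀ (z : Fin (d l) → ℝ) (j : ℕ) (hj : j < m),
          g l z (Fin.cast h.symm ⟨2 * j, by omega⟩)
              = min (z ⟨2 * j, by omega⟩) (z ⟨2 * j + 1, by omega⟩) ∧
          g l z (Fin.cast h.symm ⟨2 * j + 1, by omega⟩)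
              = max (z ⟨2 * j, by omega⟩) (z ⟨2 * j + 1, by omega⟩)) :
    ∀ (L : ℕ) (y : Fin (d 0) → ℝ) (a b : ℝ), 0 < a →
      neuralChain d g L (fun i => a * y i + b)
        = fun i => a * neuralChain d g L y i + b := by
  refine neuralChain_normalizationEquivariant fun l => ?_
  rcases hg l with ⟨hlin, hone⟩ | ⟨m, hm, h, hsort⟩
  · exact .of_isLinearMap hlin hone
  · exact .of_forall_eq_min_or_max (forall_eq_min_or_max_of_sortPairs hm h hsort)
end
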